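/- arXiv:2111.05257 — 8 statements merged into one kernel-verified Lean document; each statement's English description precedes it below -/
import Mathlib

section
/- Let x_1, …, x_{T+1} be the adaptive FTRL iterates for cost vectors c_1, …, c_T. Then for every N ∈ {1, …, T} and every u ∈ ℝ^d with ‖u‖ ≤ 1, one has Σ_{t=1}^N ⟨c_t, x_t − u⟩ ≤ 4.5·√(1 + σ_{1:N}). -/
open RealInnerProductSpace

/-- Vectors in `ℝ^d` with the Euclidean structure. -/
abbrev Vec (d : ℕ) := EuclideanSpace ℝ (Fin d)

namespace Stmt0Aux

noncomputable def sig {d : ℕ} (c : ℕ → Vec d) (t : ℕ) : ℝ :=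
  1 + ∑ s ∈ Finset.Icc 1 t, ‖c s‖ ^ 2

noncomputable def eta {d : ℕ} (c : ℕ → Vec d) (t : ℕ) : ℝ := Real.sqrt (sig c t)

noncomputable def F {d : ℕ} (c : ℕ → Vec d) (t : ℕ) (y : Vec d) : ℝ :=
  ⟪∑ s ∈ Finset.Icc 1 t, c s, y⟫ + eta c t / 2 * ‖y‖ ^ 2

lemma one_le_sig {d} (c : ℕ → Vec d) (t : ℕ) : 1 ≤ sig c t := by
  have : (0:ℝ) ≤ ∑ s ∈ Finset.Icc 1 t, ‖c s‖ ^ 2 :=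
    Finset.sum_nonneg fun _ _ => sq_nonneg _
  unfold sig; linarith

lemma one_le_eta {d} (c : ℕ → Vec d) (t : ℕ) : 1 ≤ eta c t := by
  rw [show (1:ℝ) = Real.sqrt 1 by simp]
  exact Real.sqrt_le_sqrt (one_le_sig c t)

lemma eta_pos {d} (c : ℕ → Vec d) (t : ℕ) : 0 < eta c t :=
  lt_of_lt_of_le one_pos (one_le_eta c t)

lemma sig_succ {d} (c : ℕ → Vec d) (t : ℕ) :
    sig c (t+1) = sig c t + ‖c (t+1)‖ ^ 2 := by
  unfold sig
  rw [Finset.sum_Icc_succ_top (Nat.succ_le_succ (Nat.zero_le t))]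
  ring

lemma sq_eta {d} (c : ℕ → Vec d) (t : ℕ) : eta c t ^ 2 = sig c t := by
  unfold eta
  exact Real.sq_sqrt (by linarith [one_le_sig c t])

lemma eta_mono {d} (c : ℕ → Vec d) (t : ℕ) : eta c t ≤ eta c (t+1) := by
  apply Real.sqrt_le_sqrt
  rw [sig_succ]; nlinarith [sq_nonneg ‖c (t+1)‖]

lemma eta_double {d} (c : ℕ → Vec d) (t : ℕ) (hc : ‖c (t+1)‖ ≤ 1) :
    eta c (t+1) ≤ 2 * eta c t := by
  have h1 : sig c (t+1) ≤ 4 * sig c t := by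
    rw [sig_succ]
    nlinarith [one_le_sig c t, norm_nonneg (c (t+1))]
  calc eta c (t+1) ≤ Real.sqrt (4 * sig c t) := Real.sqrt_le_sqrt h1
    _ = 2 * eta c t := by
        rw [show (4:ℝ) = 2^2 by norm_num, Real.sqrt_mul (by positivity), Real.sqrt_sq (by norm_num)]
        rfl

lemma div_le_three {d} (c : ℕ → Vec d) (t : ℕ) (hc : ‖c (t+1)‖ ≤ 1) :
    ‖c (t+1)‖ ^ 2 / eta c t ≤ 3 * (eta c (t+1) - eta c t) := by
  have ha := eta_pos c t
  have hm := eta_mono c t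
  have hd := eta_double c t hc
  have hsq : eta c (t+1) ^ 2 - eta c t ^ 2 = ‖c (t+1)‖ ^ 2 := by
    rw [sq_eta, sq_eta, sig_succ]; ring
  rw [div_le_iff₀ ha]
  nlinarith

lemma F_zero {d} (c : ℕ → Vec d) (z : Vec d) : F c 0 z = 1/2 * ‖z‖ ^ 2 := by
  have h : Finset.Icc 1 0 = (∅ : Finset ℕ) := by simp
  unfold F eta sig
  rw [h]
  simp

lemma F_succ {d} (c : ℕ → Vec d) (t : ℕ) (z : Vec d) :
    F c (t+1) z = F c t z + ⟪c (t+1), z⟫ + (eta c (t+1) - eta c t)/2 * ‖z‖ ^ 2 := by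
  unfold F
  rw [Finset.sum_Icc_succ_top (Nat.succ_le_succ (Nat.zero_le t)), inner_add_left]
  ring

lemma strong_min {d} (c : ℕ → Vec d) (t : ℕ) (a y : Vec d)
    (hmin : ∀ z : Vec d, ‖z‖ ≤ 1 → F c t a ≤ F c t z)
    (ha : ‖a‖ ≤ 1) (hy : ‖y‖ ≤ 1) :
    F c t a + eta c t / 4 * ‖a - y‖ ^ 2 ≤ F c t y := by
  have hη := eta_pos c t
  have hz : ‖(1/2 : ℝ) • (a + y)‖ ≤ 1 := by
    rw [norm_smul]
    have : ‖a + y‖ ≤ 2 := le_trans (norm_add_le a y) (by linarith)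
    rw [Real.norm_eq_abs]
    rw [abs_of_pos (by norm_num)]
    linarith
  have h := hmin _ hz
  have hp : ‖a + y‖ ^ 2 + ‖a - y‖ ^ 2 = 2 * (‖a‖ ^ 2 + ‖y‖ ^ 2) := by
    have := parallelogram_law_with_norm ℝ a y
    nlinarith [this]
  unfold F at h ⊢
  rw [inner_smul_right, inner_add_right, norm_smul, Real.norm_eq_abs,
    abs_of_pos (show (0:ℝ) < 1/2 by norm_num)] at h
  have hexp : (1/2 * ‖a + y‖) ^ 2 = 1/4 * (2 * (‖a‖^2 + ‖y‖^2) - ‖a - y‖^2) := by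
    rw [← hp]; ring
  rw [hexp] at h
  nlinarith [h, hη]

lemma inner_bound {d} (w v : Vec d) (η : ℝ) (hη : 0 < η) :
    ⟪w, v⟫ ≤ η/4 * ‖v‖ ^ 2 + ‖w‖ ^ 2 / η := by
  have h1 : ⟪w, v⟫ ≤ ‖w‖ * ‖v‖ := real_inner_le_norm w v
  have key : ‖w‖ * ‖v‖ ≤ η/4 * ‖v‖ ^ 2 + ‖w‖ ^ 2 / η := by
    rw [← sub_nonneg]
    have he : η/4 * ‖v‖ ^ 2 + ‖w‖ ^ 2 / η - ‖w‖ * ‖v‖ = (η * ‖v‖ - 2 * ‖w‖) ^ 2 / (4 * η) := by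
      field_simp; ring
    rw [he]; positivity
  linarith

end Stmt0Aux

open Stmt0Aux

/-- Part (1) of Theorem 3.1: the adaptive FTRL iterates satisfy
`Σ_{t=1}^N ⟨c_t, x_t − u⟩ ≤ 4.5·√(1 + σ_{1:N})` for every `N ∈ {1,…,T}` and every
`u` in the unit ball. -/
theorem stmt0 {d T : ℕ} (c x : ℕ → Vec d)
    (hc : ∀ t ∈ Finset.Icc 1 T, ‖c t‖ ≤ 1)
    (hx1 : x 1 = 0)
    (hxball : ∀ t ∈ Finset.Icc 1 T, ‖x (t + 1)‖ ≤ 1)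
    (hxmin : ∀ t ∈ Finset.Icc 1 T, ∀ y : Vec d, ‖y‖ ≤ 1 →
      ⟪(∑ s ∈ Finset.Icc 1 t, c s), x (t + 1)⟫ +
          Real.sqrt (1 + ∑ s ∈ Finset.Icc 1 t, ‖c s‖ ^ 2) / 2 * ‖x (t + 1)‖ ^ 2 ≤
        ⟪(∑ s ∈ Finset.Icc 1 t, c s), y⟫ +
          Real.sqrt (1 + ∑ s ∈ Finset.Icc 1 t, ‖c s‖ ^ 2) / 2 * ‖y‖ ^ 2)
    (N : ℕ) (hN : N ∈ Finset.Icc 1 T)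
    (u : Vec d) (hu : ‖u‖ ≤ 1) :
    ∑ t ∈ Finset.Icc 1 N, ⟪c t, x t - u⟫ ≤
      4.5 * Real.sqrt (1 + ∑ s ∈ Finset.Icc 1 N, ‖c s‖ ^ 2) := by
  obtain ⟨hN1, hNT⟩ := Finset.mem_Icc.mp hN
  -- restate hxmin in terms of F
  have hxmin' : ∀ t ∈ Finset.Icc 1 T, ∀ y : Vec d, ‖y‖ ≤ 1 →
      F c t (x (t+1)) ≤ F c t y := by
    intro t ht y hy
    have := hxmin t ht y hy
    simpa [F, eta, sig] using this
  -- minimality also at t = 0 (x 1 = 0 minimizes F 0)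
  have hmin : ∀ i < N, ∀ z : Vec d, ‖z‖ ≤ 1 → F c i (x (i+1)) ≤ F c i z := by
    intro i hi z hz
    rcases Nat.eq_zero_or_pos i with h0 | h1
    · subst h0
      rw [F_zero, F_zero, hx1]
      simp only [norm_zero]
      nlinarith [sq_nonneg ‖z‖]
    · exact hxmin' i (Finset.mem_Icc.mpr ⟨h1, by omega⟩) z hz
  have hball1 : ∀ i < N, ‖x (i+1)‖ ≤ 1 := by
    intro i hi
    rcases Nat.eq_zero_or_pos i with h0 | h1
    · subst h0; rw [hx1]; simp
    · exact hxball i (Finset.mem_Icc.mpr ⟨h1, by omega⟩)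
  have hball2 : ∀ i < N, ‖x (i+2)‖ ≤ 1 := by
    intro i hi
    exact hxball (i+1) (Finset.mem_Icc.mpr ⟨by omega, by omega⟩)
  have hc' : ∀ i < N, ‖c (i+1)‖ ≤ 1 := by
    intro i hi
    exact hc (i+1) (Finset.mem_Icc.mpr ⟨by omega, by omega⟩)
  -- per-step bound
  have hD : ∀ i < N,
      ⟪c (i+1), x (i+1)⟫ + (F c i (x (i+1)) - F c (i+1) (x (i+2)))
        ≤ 3 * (eta c (i+1) - eta c i) := by
    intro i hi
    have hrec := F_succ c i (x (i+2))
    have hstrong := strong_min c i (x (i+1)) (x (i+2)) (hmin i hi) (hball1 i hi) (hball2 i hi)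
    have hib := inner_bound (c (i+1)) (x (i+1) - x (i+2)) (eta c i) (eta_pos c i)
    have h3 := div_le_three c i (hc' i hi)
    have hsub : ⟪c (i+1), x (i+1) - x (i+2)⟫
        = ⟪c (i+1), x (i+1)⟫ - ⟪c (i+1), x (i+2)⟫ := inner_sub_right _ _ _
    have h5 : 0 ≤ (eta c (i+1) - eta c i) / 2 * ‖x (i+2)‖ ^ 2 :=
      mul_nonneg (by linarith [eta_mono c i]) (sq_nonneg _)
    linarith
  -- telescoping
  have htel : ∑ i ∈ Finset.range N,
      (F c i (x (i+1)) - F c (i+1) (x (i+2)))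
        = F c 0 (x 1) - F c N (x (N+1)) :=
    Finset.sum_range_sub' (fun i => F c i (x (i+1))) N
  have htel2 : ∑ i ∈ Finset.range N, (eta c (i+1) - eta c i) = eta c N - eta c 0 :=
    Finset.sum_range_sub (eta c) N
  have hg0 : F c 0 (x 1) = 0 := by rw [F_zero, hx1]; simp
  have hη0 : eta c 0 = 1 := by
    unfold eta sig
    simp
  -- sum of per-step bounds
  have hsum : ∑ i ∈ Finset.range N,
      (⟪c (i+1), x (i+1)⟫ + (F c i (x (i+1)) - F c (i+1) (x (i+2))))
        ≤ ∑ i ∈ Finset.range N, 3 * (eta c (i+1) - eta c i) :=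
    Finset.sum_le_sum fun i hi => hD i (Finset.mem_range.mp hi)
  rw [Finset.sum_add_distrib, htel, ← Finset.mul_sum, htel2, hg0, hη0] at hsum
  -- hsum : ∑ ⟪c (i+1), x (i+1)⟫ + (0 - F c N (x (N+1))) ≤ 3 * (eta c N - 1)
  have hkey : ∑ i ∈ Finset.range N, ⟪c (i+1), x (i+1)⟫
      ≤ 3 * (eta c N - 1) + F c N (x (N+1)) := by linarith
  -- compare with u
  have hNmem : N ∈ Finset.Icc 1 T := hN
  have hFu : F c N (x (N+1)) ≤ F c N u := hxmin' N hNmem u hu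
  -- rewrite the goal
  have hIcc : ∀ f : ℕ → ℝ, ∑ t ∈ Finset.Icc 1 N, f t = ∑ i ∈ Finset.range N, f (i+1) := by
    intro f
    rw [show Finset.Icc 1 N = Finset.Ico 1 (N+1) from by rw [Finset.Ico_add_one_right_eq_Icc],
      Finset.sum_Ico_eq_sum_range]
    simp [Nat.add_comm]
  have hgoal : ∑ t ∈ Finset.Icc 1 N, ⟪c t, x t - u⟫
      = (∑ i ∈ Finset.range N, ⟪c (i+1), x (i+1)⟫) - ⟪∑ s ∈ Finset.Icc 1 N, c s, u⟫ := by
    simp only [inner_sub_right]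
    rw [Finset.sum_sub_distrib, ← sum_inner, hIcc (fun t => ⟪c t, x t⟫)]
  have hFuval : F c N u = ⟪∑ s ∈ Finset.Icc 1 N, c s, u⟫ + eta c N / 2 * ‖u‖ ^ 2 := rfl
  have hu2 : ‖u‖ ^ 2 ≤ 1 := by nlinarith [norm_nonneg u]
  have hηN : 1 ≤ eta c N := one_le_eta c N
  have hfinal : ∑ t ∈ Finset.Icc 1 N, ⟪c t, x t - u⟫ ≤ 4.5 * eta c N := by
    rw [hgoal]
    have h6 : eta c N / 2 * ‖u‖ ^ 2 ≤ eta c N / 2 := by nlinarith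
    linarith [hkey, hFu, hFuval.le, hFuval.ge, hηN, h6]
  have : eta c N = Real.sqrt (1 + ∑ s ∈ Finset.Icc 1 N, ‖c s‖ ^ 2) := rfl
  linarith [hfinal]
end

section
/- Let α ∈ (0,1) and let x_1, …, x_{T+1} be the adaptive FTRL iterates for cost vectors c_1, …, c_T. Suppose S ∈ {0,1,…,T} is an index such that for all t with S < t ≤ T one has ‖c_{1:t}‖ ≥ (α/4)·(1 + σ_{1:t}). Then for every u ∈ ℝ^d with ‖u‖ ≤ 1, Σ_{t=1}^T ⟨c_t, x_t − u⟩ ≤ √(1 + σ_{1:S})/2 + (18 + 8·log(1 + σ_{1:T}))/α + ‖c_{1:S}‖ + Σ_{t=1}^S ⟨c_t, x_t⟩. -/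
open RealInnerProductSpace

private lemma tele (f : ℕ → ℝ) {s : ℕ} : ∀ {n : ℕ}, s ≤ n →
    ∑ t ∈ Finset.Icc (s+1) n, (f t - f (t-1)) = f n - f s := by
  intro n
  induction n with
  | zero => intro h; interval_cases s; simp
  | succ n ih =>
    intro h
    rcases Nat.lt_or_ge s (n+1) with h' | h'
    · have hsn : s ≤ n := Nat.lt_succ_iff.mp h'
      rw [Finset.sum_Icc_succ_top (by omega : s+1 ≤ n+1), ih hsn]
      simp
    · have : s = n+1 := le_antisymm h h'
      subst this; simp

private lemma log_diff {a b : ℝ} (hb : 0 < b) (hab : b ≤ a) :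
    (a - b)/a ≤ Real.log a - Real.log b := by
  have ha : 0 < a := hb.trans_le hab
  have h := Real.log_le_sub_one_of_pos (show 0 < b/a from div_pos hb ha)
  rw [Real.log_div hb.ne' ha.ne'] at h
  have h2 : b/a - 1 = -((a-b)/a) := by field_simp; ring
  rw [h2] at h
  linarith

private lemma minball {E : Type*} [NormedAddCommGroup E] [InnerProductSpace ℝ E]
    (g x₀ : E) (lam : ℝ) (hlam : 0 < lam) (hx₀ : ‖x₀‖ ≤ 1)
    (hmin : ∀ y : E, ‖y‖ ≤ 1 → ⟪g, x₀⟫ + lam/2 * ‖x₀‖^2 ≤ ⟪g, y⟫ + lam/2 * ‖y‖^2) :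
    x₀ = -(max lam ‖g‖)⁻¹ • g := by
  set m : ℝ := max lam ‖g‖ with hm
  have hm0 : 0 < m := lt_of_lt_of_le hlam (le_max_left _ _)
  set xs : E := -m⁻¹ • g with hxs
  have hgm : ‖g‖ ≤ m := le_max_right _ _
  have hxsn : ‖xs‖ = ‖g‖ / m := by
    rw [hxs, norm_smul, Real.norm_eq_abs, abs_neg, abs_inv, abs_of_pos hm0,
      inv_mul_eq_div]
  have hxsball : ‖xs‖ ≤ 1 := by
    rw [hxsn]; exact div_le_one_of_le₀ hgm hm0.le
  have hinner_xs : ⟪g, xs⟫ = -(‖g‖^2 / m) := by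
    rw [hxs, real_inner_smul_right, real_inner_self_eq_norm_sq]
    ring
  -- xs is a global minimizer
  have hopt : ∀ y : E, ‖y‖ ≤ 1 → ⟪g, xs⟫ + lam/2 * ‖xs‖^2 ≤ ⟪g, y⟫ + lam/2 * ‖y‖^2 := by
    intro y hy
    have hiy : -(‖g‖ * ‖y‖) ≤ ⟪g, y⟫ := by
      have h1 := abs_real_inner_le_norm g y
      have h2 := neg_abs_le (⟪g, y⟫)
      linarith
    have hyn : 0 ≤ ‖y‖ := norm_nonneg y
    rcases le_or_gt ‖g‖ lam with hcase | hcase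
    · have hmlam : m = lam := max_eq_left hcase
      rw [hinner_xs, hxsn, hmlam]
      have hexp : ‖y + lam⁻¹ • g‖^2 = ‖y‖^2 + 2 * (lam⁻¹ * ⟪g, y⟫) + (‖g‖/lam)^2 := by
        rw [norm_add_sq_real, real_inner_smul_right, real_inner_comm y g, norm_smul,
          Real.norm_eq_abs, abs_inv, abs_of_pos hlam]
        field_simp
        try ring
      have hnn : 0 ≤ ‖y‖^2 + 2 * (lam⁻¹ * ⟪g, y⟫) + (‖g‖/lam)^2 := hexp ▸ sq_nonneg _
      have key : 0 ≤ lam/2 * (‖y‖^2 + 2 * (lam⁻¹ * ⟪g, y⟫) + (‖g‖/lam)^2) :=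
        mul_nonneg (by linarith) hnn
      have e1 : lam/2 * (2 * (lam⁻¹ * ⟪g, y⟫)) = ⟪g, y⟫ := by field_simp
      have e2 : lam/2 * (‖g‖/lam)^2 = ‖g‖^2/(2*lam) := by field_simp; try ring
      have e3 : -(‖g‖^2/lam) + lam/2 * (‖g‖/lam)^2 = -(‖g‖^2/(2*lam)) := by
        field_simp
        try ring
      nlinarith [key, e1, e2, e3]
    · have hmg : m = ‖g‖ := max_eq_right hcase.le
      have hg0 : 0 < ‖g‖ := hlam.trans hcase
      rw [hinner_xs, hxsn, hmg]
      have e4 : ‖g‖^2/‖g‖ = ‖g‖ := by field_simp; try ring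
      have e5 : ‖g‖/‖g‖ = 1 := div_self hg0.ne'
      rw [e4, e5]
      have key : 0 ≤ (1 - ‖y‖) * (‖g‖ - lam/2 * (1 + ‖y‖)) := by
        apply mul_nonneg (by linarith)
        nlinarith
      nlinarith [hiy, key]
  -- midpoint argument
  set z : E := (2:ℝ)⁻¹ • (x₀ + xs) with hz
  have hzball : ‖z‖ ≤ 1 := by
    rw [hz, norm_smul]
    simp only [norm_inv, Real.norm_ofNat]
    linarith [norm_add_le x₀ xs, hx₀, hxsball]
  have hFxs := hopt x₀ hx₀
  have hiz : ⟪g, z⟫ = (⟪g, x₀⟫ + ⟪g, xs⟫)/2 := by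
    rw [hz, real_inner_smul_right, inner_add_right]; ring
  have hnz : ‖z‖^2 = (‖x₀‖^2 + ‖xs‖^2)/2 - ‖x₀ - xs‖^2/4 := by
    rw [hz, norm_smul]
    simp only [norm_inv, Real.norm_ofNat]
    have h1 : ‖x₀ + xs‖^2 = ‖x₀‖^2 + 2*⟪x₀, xs⟫ + ‖xs‖^2 := norm_add_sq_real x₀ xs
    have h2 : ‖x₀ - xs‖^2 = ‖x₀‖^2 - 2*⟪x₀, xs⟫ + ‖xs‖^2 := norm_sub_sq_real x₀ xs
    rw [mul_pow]
    linarith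
  have hmid := hmin z hzball
  rw [hiz, hnz] at hmid
  have hdist : ‖x₀ - xs‖^2 ≤ 0 := by nlinarith [hmid, hFxs, hlam]
  have h0 : ‖x₀ - xs‖^2 = 0 := le_antisymm hdist (sq_nonneg _)
  have hzero : x₀ - xs = 0 :=
    norm_eq_zero.mp (pow_eq_zero_iff (n := 2) (by norm_num) |>.mp h0)
  have hfin := sub_eq_zero.mp hzero
  rw [hfin, hxs]


private lemma split_sum (f : ℕ → ℝ) {S T : ℕ} (h : S ≤ T) :
    ∑ t ∈ Finset.Icc 1 T, f t
      = (∑ t ∈ Finset.Icc 1 S, f t) + ∑ t ∈ Finset.Icc (S+1) T, f t := by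
  rw [show Finset.Icc 1 T = Finset.Ioc 0 T from Finset.Icc_add_one_left_eq_Ioc 0 T,
    show Finset.Icc 1 S = Finset.Ioc 0 S from Finset.Icc_add_one_left_eq_Ioc 0 S,
    Finset.Icc_add_one_left_eq_Ioc]
  exact (Finset.sum_Ioc_consecutive _ (Nat.zero_le S) h).symm

private lemma split_sum2 (f : ℕ → ℝ) {S T : ℕ} (h : S < T) :
    ∑ t ∈ Finset.Icc (S+1) T, f t = f (S+1) + ∑ t ∈ Finset.Icc (S+2) T, f t := by
  rw [Finset.Icc_add_one_left_eq_Ioc, show Finset.Icc (S+2) T = Finset.Ioc (S+1) T from Finset.Icc_add_one_left_eq_Ioc (S+1) T,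
    ← Finset.sum_Ioc_consecutive f (Nat.le_succ S) h, Nat.Ioc_succ_singleton,
    Finset.sum_singleton]



set_option maxHeartbeats 1000000

/-- Part (2) of Theorem 3.1: if `‖c_{1:t}‖ ≥ (α/4)(1 + σ_{1:t})` for all
`t > S`, then the adaptive FTRL iterates satisfy the refined regret bound
`Σ_{t=1}^T ⟨c_t, x_t − u⟩ ≤ √(1+σ_{1:S})/2 + (18 + 8 log(1+σ_{1:T}))/α + ‖c_{1:S}‖
  + Σ_{t=1}^S ⟨c_t, x_t⟩`. -/
theorem stmt1 {d T : ℕ} (α : ℝ) (hα0 : 0 < α) (hα1 : α < 1)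
    (c x : ℕ → Vec d)
    (hc : ∀ t ∈ Finset.Icc 1 T, ‖c t‖ ≤ 1)
    (hx1 : x 1 = 0)
    (hxball : ∀ t ∈ Finset.Icc 1 T, ‖x (t + 1)‖ ≤ 1)
    (hxmin : ∀ t ∈ Finset.Icc 1 T, ∀ y : Vec d, ‖y‖ ≤ 1 →
      ⟪(∑ s ∈ Finset.Icc 1 t, c s), x (t + 1)⟫ +
          Real.sqrt (1 + ∑ s ∈ Finset.Icc 1 t, ‖c s‖ ^ 2) / 2 * ‖x (t + 1)‖ ^ 2 ≤
        ⟪(∑ s ∈ Finset.Icc 1 t, c s), y⟫ +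
          Real.sqrt (1 + ∑ s ∈ Finset.Icc 1 t, ‖c s‖ ^ 2) / 2 * ‖y‖ ^ 2)
    (S : ℕ) (hS : S ≤ T)
    (hgrow : ∀ t, S < t → t ≤ T →
      α / 4 * (1 + ∑ s ∈ Finset.Icc 1 t, ‖c s‖ ^ 2) ≤ ‖∑ s ∈ Finset.Icc 1 t, c s‖)
    (u : Vec d) (hu : ‖u‖ ≤ 1) :
    ∑ t ∈ Finset.Icc 1 T, ⟪c t, x t - u⟫ ≤
      Real.sqrt (1 + ∑ s ∈ Finset.Icc 1 S, ‖c s‖ ^ 2) / 2 +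
        (18 + 8 * Real.log (1 + ∑ s ∈ Finset.Icc 1 T, ‖c s‖ ^ 2)) / α +
        ‖∑ s ∈ Finset.Icc 1 S, c s‖ + ∑ t ∈ Finset.Icc 1 S, ⟪c t, x t⟫ := by
  classical
  obtain ⟨σp, hσap⟩ : ∃ f : ℕ → ℝ, ∀ t, f t = ∑ s ∈ Finset.Icc 1 t, ‖c s‖ ^ 2 :=
    ⟨_, fun t => rfl⟩
  obtain ⟨G, hGap⟩ : ∃ f : ℕ → Vec d, ∀ t, f t = ∑ s ∈ Finset.Icc 1 t, c s :=
    ⟨_, fun t => rfl⟩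
  obtain ⟨lam, hlamap⟩ : ∃ f : ℕ → ℝ, ∀ t, f t = Real.sqrt (1 + σp t) :=
    ⟨_, fun t => rfl⟩
  obtain ⟨mm, hmmap⟩ : ∃ f : ℕ → ℝ, ∀ t, f t = max (lam t) ‖G t‖ :=
    ⟨_, fun t => rfl⟩
  obtain ⟨A, hA'⟩ : ∃ f : ℕ → ℝ, ∀ t, f t = ⟪G t, x (t+1)⟫ + lam t / 2 * ‖x (t+1)‖^2 :=
    ⟨_, fun t => rfl⟩
  obtain ⟨L, hLap⟩ : ∃ f : ℕ → ℝ, ∀ t, f t = Real.log (1 + σp t) :=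
    ⟨_, fun t => rfl⟩
  -- fold the goal
  rw [show Real.sqrt (1 + ∑ s ∈ Finset.Icc 1 S, ‖c s‖ ^ 2) = lam S by
        rw [hlamap S, hσap S],
      show Real.log (1 + ∑ s ∈ Finset.Icc 1 T, ‖c s‖ ^ 2) = L T by
        rw [hLap T, hσap T],
      show (∑ s ∈ Finset.Icc 1 S, c s) = G S from (hGap S).symm]
  -- basic facts
  have hσnn : ∀ t, 0 ≤ σp t := by
    intro t; rw [hσap t]; positivity
  have hσmono : ∀ {s t : ℕ}, s ≤ t → σp s ≤ σp t := by
    intro s t hst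
    rw [hσap s, hσap t]
    apply Finset.sum_le_sum_of_subset_of_nonneg
    · exact Finset.Icc_subset_Icc le_rfl hst
    · intro i _ _; positivity
  have hσsucc : ∀ t, σp (t+1) = σp t + ‖c (t+1)‖^2 := by
    intro t
    rw [hσap (t+1), hσap t]
    exact Finset.sum_Icc_succ_top (Nat.succ_le_succ (Nat.zero_le t)) _
  have hGsucc : ∀ t : ℕ, G (t+1) = G t + c (t+1) := by
    intro t
    rw [hGap (t+1), hGap t]
    exact Finset.sum_Icc_succ_top (Nat.succ_le_succ (Nat.zero_le t)) _
  have hlam1 : ∀ t, 1 ≤ lam t := by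
    intro t
    rw [hlamap t]
    have h := Real.sqrt_le_sqrt (show (1:ℝ) ≤ 1 + σp t by linarith [hσnn t])
    rwa [Real.sqrt_one] at h
  have hlamsq : ∀ t, lam t ^ 2 = 1 + σp t := by
    intro t; rw [hlamap t]; exact Real.sq_sqrt (by linarith [hσnn t])
  have hlammono : ∀ {s t : ℕ}, s ≤ t → lam s ≤ lam t := by
    intro s t hst
    rw [hlamap s, hlamap t]
    exact Real.sqrt_le_sqrt (by linarith [hσmono hst])
  have hmpos : ∀ t, 0 < mm t := by
    intro t
    rw [hmmap t]
    exact lt_of_lt_of_le (by linarith [hlam1 t]) (le_max_left _ _)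
  have hLnn : ∀ t, 0 ≤ L t := by
    intro t; rw [hLap t]; exact Real.log_nonneg (by linarith [hσnn t])
  have hinnbd : ∀ (a b : Vec d), -(‖a‖ * ‖b‖) ≤ ⟪a, b⟫ := by
    intro a b
    have h1 := abs_real_inner_le_norm a b
    have h2 := neg_abs_le (⟪a, b⟫)
    linarith
  -- rewrite LHS
  have hsub : ∀ t, ⟪c t, x t - u⟫ = ⟪c t, x t⟫ - ⟪c t, u⟫ := fun t =>
    inner_sub_right _ _ _
  have hLHS : ∑ t ∈ Finset.Icc 1 T, ⟪c t, x t - u⟫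
      = (∑ t ∈ Finset.Icc 1 T, ⟪c t, x t⟫) - ⟪G T, u⟫ := by
    rw [Finset.sum_congr rfl (fun t _ => hsub t), Finset.sum_sub_distrib, hGap T,
      sum_inner]
  have hGTu : -⟪G T, u⟫ ≤ ‖G T‖ := by
    have := hinnbd (G T) u
    nlinarith [norm_nonneg (G T), norm_nonneg u]
  rw [hLHS]
  -- head/tail split
  rw [split_sum (fun t => ⟪c t, x t⟫) hS]
  rcases eq_or_lt_of_le hS with hST | hST
  · -- S = T : tail empty
    subst hST
    have : Finset.Icc (S+1) S = ∅ := by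
      apply Finset.Icc_eq_empty; omega
    rw [this, Finset.sum_empty]
    have h1 : 0 ≤ lam S / 2 := by linarith [hlam1 S]
    have h2 : 0 ≤ (18 + 8 * L S) / α :=
      div_nonneg (by linarith [hLnn S]) hα0.le
    linarith [hGTu]
  -- main case S < T
  have hgrow' : ∀ t, S < t → t ≤ T → α/4 * (1 + σp t) ≤ ‖G t‖ := by
    intro t h1 h2
    rw [hσap t, hGap t]
    exact hgrow t h1 h2
  have hxmin' : ∀ t, 1 ≤ t → t ≤ T → ∀ y : Vec d, ‖y‖ ≤ 1 →
      ⟪G t, x (t+1)⟫ + lam t / 2 * ‖x (t+1)‖^2 ≤ ⟪G t, y⟫ + lam t / 2 * ‖y‖^2 := by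
    intro t h1 h2 y hy
    have h := hxmin t (Finset.mem_Icc.mpr ⟨h1, h2⟩) y hy
    rw [← hσap t, ← hGap t, ← hlamap t] at h
    exact h
  have hxball' : ∀ t, 1 ≤ t → t ≤ T → ‖x (t+1)‖ ≤ 1 :=
    fun t h1 h2 => hxball t (Finset.mem_Icc.mpr ⟨h1, h2⟩)
  have hc' : ∀ t, 1 ≤ t → t ≤ T → ‖c t‖ ≤ 1 :=
    fun t h1 h2 => hc t (Finset.mem_Icc.mpr ⟨h1, h2⟩)
  have hxform : ∀ t, 1 ≤ t → t ≤ T → x (t+1) = -(mm t)⁻¹ • G t := by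
    intro t h1 h2
    rw [hmmap t]
    exact minball (G t) (x (t+1)) (lam t) (by linarith [hlam1 t]) (hxball' t h1 h2)
      (hxmin' t h1 h2)
  have hxS1ball : ‖x (S+1)‖ ≤ 1 := by
    rcases Nat.eq_zero_or_pos S with h0 | h0
    · subst h0; rw [show (0:ℕ)+1 = 1 from rfl, hx1]; simp
    · exact hxball' S h0 hS
  have hGpos : ∀ t, S < t → t ≤ T → 0 < ‖G t‖ := by
    intro t h1 h2
    have h := hgrow' t h1 h2
    nlinarith [hσnn t, mul_nonneg hα0.le (hσnn t)]
  have hxnormval : ∀ t, 1 ≤ t → t ≤ T → ‖x (t+1)‖ = ‖G t‖ / mm t := by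
    intro t h1 h2
    rw [hxform t h1 h2, norm_smul, Real.norm_eq_abs, abs_neg, abs_inv,
      abs_of_pos (hmpos t), inv_mul_eq_div]
  have hxnorm1 : ∀ t, S < t → t ≤ T → 4/α ≤ lam t → ‖x (t+1)‖ = 1 := by
    intro t h1 h2 h3
    have hg := hgrow' t h1 h2
    have hgp := hGpos t h1 h2
    have hα4 : 4 ≤ lam t * α := (div_le_iff₀ hα0).mp h3
    have h5 : lam t * 4 ≤ lam t * (lam t * α) :=
      mul_le_mul_of_nonneg_left hα4 (by linarith [hlam1 t])
    have h6 : α * lam t ^ 2 = α * (1 + σp t) := by rw [hlamsq t]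
    have hlg : lam t ≤ ‖G t‖ := by nlinarith [hg, h5, h6]
    have hmeq : mm t = ‖G t‖ := by rw [hmmap t]; exact max_eq_right hlg
    rw [hxnormval t (by omega) h2, hmeq, div_self hgp.ne']
  -- per-step chain inequality
  have hchain : ∀ t ∈ Finset.Icc (S+1) T,
      ⟪c t, x (t+1)⟫ + (lam t/2 - lam (t-1)/2) * ‖x (t+1)‖^2 ≤ A t - A (t-1) := by
    intro t ht
    obtain ⟨ht1, ht2⟩ := Finset.mem_Icc.mp ht
    have htm : t - 1 + 1 = t := by omega
    have hGt : G t = G (t-1) + c t := by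
      conv_lhs => rw [← htm]
      rw [hGsucc, htm]
    have hbr : ⟪G (t-1), x t⟫ + lam (t-1)/2 * ‖x t‖^2
        ≤ ⟪G (t-1), x (t+1)⟫ + lam (t-1)/2 * ‖x (t+1)‖^2 := by
      rcases Nat.lt_or_ge t 2 with h2 | h2
      · have ht1' : t = 1 := by omega
        subst ht1'
        have hG0 : G 0 = 0 := by
          rw [hGap 0, Finset.Icc_eq_empty (by omega), Finset.sum_empty]
        rw [show (1:ℕ) - 1 = 0 from rfl, hG0, hx1]
        simp only [inner_zero_left, norm_zero]
        have h0 : (0:ℝ) ≤ lam 0 / 2 * ‖x (1+1)‖^2 :=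
          mul_nonneg (by linarith [hlam1 0]) (sq_nonneg _)
        nlinarith [h0]
      · have h := hxmin' (t-1) (by omega) (by omega) (x (t+1)) (hxball' t (by omega) ht2)
        rw [htm] at h
        exact h
    have hsplit : ⟪G t, x (t+1)⟫ = ⟪G (t-1), x (t+1)⟫ + ⟪c t, x (t+1)⟫ := by
      rw [hGt, inner_add_left]
    rw [hA' t, hA' (t-1), htm, hsplit]
    linarith [hbr]
  have key5 : ∑ t ∈ Finset.Icc (S+1) T,
      (⟪c t, x (t+1)⟫ + (lam t/2 - lam (t-1)/2) * ‖x (t+1)‖^2) ≤ A T - A S := by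
    calc ∑ t ∈ Finset.Icc (S+1) T,
        (⟪c t, x (t+1)⟫ + (lam t/2 - lam (t-1)/2) * ‖x (t+1)‖^2)
        ≤ ∑ t ∈ Finset.Icc (S+1) T, (A t - A (t-1)) := Finset.sum_le_sum hchain
      _ = A T - A S := tele A hST.le
  -- bound on A T
  have hGT0 : G T ≠ 0 := by
    intro h
    have := hGpos T hST le_rfl
    rw [h] at this; simp at this
  have hGTn0 : ‖G T‖ ≠ 0 := norm_ne_zero_iff.mpr hGT0
  have hAT : A T ≤ -‖G T‖ + lam T / 2 := by
    have hy : ‖-(‖G T‖)⁻¹ • G T‖ = 1 := by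
      rw [norm_smul, Real.norm_eq_abs, abs_neg, abs_inv, abs_norm]
      field_simp
    have h := hxmin' T (by omega) le_rfl (-(‖G T‖)⁻¹ • G T) (le_of_eq hy)
    have hin : ⟪G T, -(‖G T‖)⁻¹ • G T⟫ = -‖G T‖ := by
      rw [real_inner_smul_right, real_inner_self_eq_norm_sq]
      field_simp
    rw [hin, hy] at h
    rw [hA' T]
    nlinarith [h]
  -- bound on A S
  have hAS : -‖G S‖ ≤ A S := by
    rw [hA' S]
    have h1 := hinnbd (G S) (x (S+1))
    have h2 : ‖G S‖ * ‖x (S+1)‖ ≤ ‖G S‖ * 1 :=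
      mul_le_mul_of_nonneg_left hxS1ball (norm_nonneg _)
    have h3 : 0 ≤ lam S / 2 * ‖x (S+1)‖^2 :=
      mul_nonneg (by linarith [hlam1 S]) (sq_nonneg _)
    linarith
  -- the mu potential
  obtain ⟨μ, hμ'⟩ : ∃ f : ℕ → ℝ, ∀ t, f t = min (lam t) (4/α) / 2 :=
    ⟨_, fun t => rfl⟩
  have hmu : ∀ t ∈ Finset.Icc (S+1) T,
      (lam t/2 - lam (t-1)/2) * (1 - ‖x (t+1)‖^2) ≤ μ t - μ (t-1) := by
    intro t ht
    obtain ⟨ht1, ht2⟩ := Finset.mem_Icc.mp ht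
    have hmono := hlammono (Nat.sub_le t 1)
    rcases le_or_gt (4/α) (lam t) with h4 | h4
    · have hx1' : ‖x (t+1)‖ = 1 := hxnorm1 t (by omega) ht2 h4
      rw [hx1']
      have hμm : μ (t-1) ≤ μ t := by
        rw [hμ' t, hμ' (t-1)]
        have := min_le_min hmono (le_refl (4/α))
        linarith
      have hz : (lam t/2 - lam (t-1)/2) * (1 - (1:ℝ)^2) = 0 := by ring
      linarith
    · have hlt : lam (t-1) < 4/α := lt_of_le_of_lt hmono h4
      rw [hμ' t, hμ' (t-1), min_eq_left h4.le, min_eq_left hlt.le]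
      have hxb := hxball' t (by omega) ht2
      have hxnn := norm_nonneg (x (t+1))
      nlinarith [sq_nonneg ‖x (t+1)‖]
  have hmusum : ∑ t ∈ Finset.Icc (S+1) T, (lam t/2 - lam (t-1)/2) * (1 - ‖x (t+1)‖^2)
      ≤ 2/α := by
    calc ∑ t ∈ Finset.Icc (S+1) T, (lam t/2 - lam (t-1)/2) * (1 - ‖x (t+1)‖^2)
        ≤ ∑ t ∈ Finset.Icc (S+1) T, (μ t - μ (t-1)) := Finset.sum_le_sum hmu
      _ = μ T - μ S := tele μ hST.le
      _ ≤ 2/α := by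
        rw [hμ' T, hμ' S]
        have h1 : min (lam T) (4/α) ≤ 4/α := min_le_right _ _
        have h2 : 0 < min (lam S) (4/α) :=
          lt_min (by linarith [hlam1 S]) (by positivity)
        have h3 : (4:ℝ)/α = 2/α + 2/α := by ring
        linarith
  -- movement bound for t ≥ S+2
  have hdiffbd : ∀ t ∈ Finset.Icc (S+2) T,
      ⟪c t, x t - x (t+1)⟫ ≤ 8/α * (L t - L (t-1)) := by
    intro t ht
    obtain ⟨ht1, ht2⟩ := Finset.mem_Icc.mp ht
    have htm : t - 1 + 1 = t := by omega
    have hGt : G t = G (t-1) + c t := by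
      conv_lhs => rw [← htm]
      rw [hGsucc, htm]
    have hσt : σp t = σp (t-1) + ‖c t‖^2 := by
      conv_lhs => rw [← htm]
      rw [hσsucc, htm]
    have hxt : x t = -(mm (t-1))⁻¹ • G (t-1) := by
      have h := hxform (t-1) (by omega) (by omega)
      rwa [htm] at h
    have hxt1 : x (t+1) = -(mm t)⁻¹ • G t := hxform t (by omega) ht2
    have hmp := hmpos (t-1)
    have hmt := hmpos t
    have hcb := hc' t (by omega) ht2
    have hcnn := norm_nonneg (c t)
    have hlamd : lam t ≤ lam (t-1) + ‖c t‖ := by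
      have hlnn : (0:ℝ) ≤ lam (t-1) := by linarith [hlam1 (t-1)]
      have hsq : 1 + σp t ≤ (lam (t-1) + ‖c t‖)^2 := by
        nlinarith [hlamsq (t-1), mul_nonneg hlnn hcnn, hσt]
      calc lam t = Real.sqrt (1 + σp t) := hlamap t
        _ ≤ Real.sqrt ((lam (t-1) + ‖c t‖)^2) := Real.sqrt_le_sqrt hsq
        _ = lam (t-1) + ‖c t‖ := Real.sqrt_sq (by linarith)
    have hGd : |‖G t‖ - ‖G (t-1)‖| ≤ ‖c t‖ := by
      have h := abs_norm_sub_norm_le (G t) (G (t-1))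
      have he : G t - G (t-1) = c t := by rw [hGt]; abel
      rw [he] at h
      exact h
    have hmd : |mm t - mm (t-1)| ≤ ‖c t‖ := by
      have h := abs_max_sub_max_le_max (lam t) ‖G t‖ (lam (t-1)) ‖G (t-1)‖
      have h1 : |lam t - lam (t-1)| ≤ ‖c t‖ := by
        rw [abs_of_nonneg (by linarith [hlammono (Nat.sub_le t 1)])]
        linarith
      calc |mm t - mm (t-1)|
          = |max (lam t) ‖G t‖ - max (lam (t-1)) ‖G (t-1)‖| := by
            rw [hmmap t, hmmap (t-1)]
        _ ≤ max |lam t - lam (t-1)| |‖G t‖ - ‖G (t-1)‖| := h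
        _ ≤ ‖c t‖ := max_le h1 hGd
    have hGpm : ‖G (t-1)‖ ≤ mm (t-1) := by
      rw [hmmap (t-1)]
      exact le_max_right _ _
    have hiq : x t - x (t+1)
        = (mm t)⁻¹ • c t + ((mm t)⁻¹ - (mm (t-1))⁻¹) • G (t-1) := by
      rw [hxt, hxt1, hGt]
      module
    have hnd : ‖x t - x (t+1)‖ ≤ 2 * ‖c t‖ / mm t := by
      rw [hiq]
      have h1 := norm_add_le ((mm t)⁻¹ • c t) (((mm t)⁻¹ - (mm (t-1))⁻¹) • G (t-1))
      rw [norm_smul, norm_smul] at h1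
      have h2 : ‖(mm t)⁻¹‖ = (mm t)⁻¹ := by
        rw [Real.norm_eq_abs, abs_of_pos (inv_pos.mpr hmt)]
      rw [h2, inv_mul_eq_div] at h1
      have h3 : ‖(mm t)⁻¹ - (mm (t-1))⁻¹‖ * ‖G (t-1)‖ ≤ ‖c t‖ / mm t := by
        have he : (mm t)⁻¹ - (mm (t-1))⁻¹ = (mm (t-1) - mm t)/(mm t * mm (t-1)) := by
          field_simp
        rw [Real.norm_eq_abs, he, abs_div, abs_of_pos (mul_pos hmt hmp),
          div_mul_eq_mul_div, div_le_div_iff₀ (mul_pos hmt hmp) hmt]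
        have habs : |mm (t-1) - mm t| ≤ ‖c t‖ := by rw [abs_sub_comm]; exact hmd
        have hGnn := norm_nonneg (G (t-1))
        have hmul : |mm (t-1) - mm t| * ‖G (t-1)‖ ≤ ‖c t‖ * mm (t-1) :=
          mul_le_mul habs hGpm hGnn hcnn
        nlinarith [hmul, hmt]
      have h4 : 2 * ‖c t‖ / mm t = ‖c t‖ / mm t + ‖c t‖ / mm t := by ring
      linarith [h1, h3]
    have hg := hgrow' t (by omega) ht2
    have hmgt : α/4 * (1 + σp t) ≤ mm t := by
      rw [hmmap t]
      exact le_trans hg (le_max_right _ _)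
    have hσpos : (0:ℝ) < 1 + σp (t-1) := by linarith [hσnn (t-1)]
    have hσpos2 : (0:ℝ) < 1 + σp t := by linarith [hσnn t]
    have hposd : (0:ℝ) < α/4 * (1 + σp t) := by nlinarith [mul_nonneg hα0.le (hσnn t)]
    have hlog : ‖c t‖^2 / (1 + σp t) ≤ L t - L (t-1) := by
      have hle : 1 + σp (t-1) ≤ 1 + σp t := by nlinarith [hσt, sq_nonneg ‖c t‖]
      have h := log_diff hσpos hle
      have he : (1 + σp t) - (1 + σp (t-1)) = ‖c t‖^2 := by rw [hσt]; ring
      rw [he, ← hLap t, ← hLap (t-1)] at h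
      exact h
    calc ⟪c t, x t - x (t+1)⟫ ≤ ‖c t‖ * ‖x t - x (t+1)‖ :=
        real_inner_le_norm _ _
      _ ≤ ‖c t‖ * (2 * ‖c t‖ / mm t) := mul_le_mul_of_nonneg_left hnd hcnn
      _ = 2 * ‖c t‖^2 / mm t := by ring
      _ ≤ 2 * ‖c t‖^2 / (α/4 * (1 + σp t)) := by
        gcongr
      _ = 8/α * (‖c t‖^2 / (1 + σp t)) := by
        field_simp
        ring
      _ ≤ 8/α * (L t - L (t-1)) :=
        mul_le_mul_of_nonneg_left hlog (by positivity)
  -- the step t = S+1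
  have hx2ball : ‖x (S+2)‖ ≤ 1 := hxball' (S+1) (by omega) (by omega)
  have hS1 : ⟪c (S+1), x (S+1) - x (S+2)⟫ ≤ 2 := by
    have h1 := real_inner_le_norm (c (S+1)) (x (S+1) - x (S+2))
    have h2 : ‖x (S+1) - x (S+2)‖ ≤ 2 := by
      have h := norm_sub_le (x (S+1)) (x (S+2))
      linarith [hxS1ball, hx2ball]
    have h3 := hc' (S+1) (by omega) (by omega)
    nlinarith [norm_nonneg (c (S+1)), norm_nonneg (x (S+1) - x (S+2))]
  -- assemble
  have hdecomp : ∀ t : ℕ, ⟪c t, x t⟫ = ⟪c t, x t - x (t+1)⟫ + ⟪c t, x (t+1)⟫ := by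
    intro t
    rw [inner_sub_right]
    ring
  have hsplitT : ∑ t ∈ Finset.Icc (S+1) T, ⟪c t, x t⟫
      = (∑ t ∈ Finset.Icc (S+1) T, ⟪c t, x t - x (t+1)⟫)
        + ∑ t ∈ Finset.Icc (S+1) T, ⟪c t, x (t+1)⟫ := by
    rw [← Finset.sum_add_distrib]
    exact Finset.sum_congr rfl (fun t _ => hdecomp t)
  have hbd1 : ∑ t ∈ Finset.Icc (S+1) T, ⟪c t, x t - x (t+1)⟫ ≤ 2 + 8/α * L T := by
    rw [split_sum2 _ hST]
    have hsum2 : ∑ t ∈ Finset.Icc (S+2) T, ⟪c t, x t - x (t+1)⟫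
        ≤ ∑ t ∈ Finset.Icc (S+2) T, 8/α * (L t - L (t-1)) := Finset.sum_le_sum hdiffbd
    have htele2 : ∑ t ∈ Finset.Icc (S+2) T, (8:ℝ)/α * (L t - L (t-1))
        = 8/α * (L T - L (S+1)) := by
      rw [← Finset.mul_sum, tele L (show S+1 ≤ T by omega)]
    rw [htele2] at hsum2
    have hL1 := hLnn (S+1)
    have hα8 : (0:ℝ) ≤ 8/α := by positivity
    have hexp : 8/α * (L T - L (S+1)) = 8/α * L T - 8/α * L (S+1) := by ring
    rw [hexp] at hsum2
    linarith [hS1, hsum2, mul_nonneg hα8 hL1]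
  have etele : ∑ t ∈ Finset.Icc (S+1) T, (lam t/2 - lam (t-1)/2) = lam T/2 - lam S/2 := by
    have h := tele (fun t => lam t / 2) hST.le
    simpa using h
  have hbd2 : ∑ t ∈ Finset.Icc (S+1) T, ⟪c t, x (t+1)⟫
      ≤ -‖G T‖ + lam S / 2 + ‖G S‖ + 2/α := by
    have e1 : ∑ t ∈ Finset.Icc (S+1) T,
        (⟪c t, x (t+1)⟫ + (lam t/2 - lam (t-1)/2) * ‖x (t+1)‖^2)
        = (∑ t ∈ Finset.Icc (S+1) T, ⟪c t, x (t+1)⟫)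
          + ∑ t ∈ Finset.Icc (S+1) T, (lam t/2 - lam (t-1)/2) * ‖x (t+1)‖^2 :=
      Finset.sum_add_distrib
    have e2 : ∑ t ∈ Finset.Icc (S+1) T, (lam t/2 - lam (t-1)/2) * ‖x (t+1)‖^2
        = (lam T/2 - lam S/2)
          - ∑ t ∈ Finset.Icc (S+1) T, (lam t/2 - lam (t-1)/2) * (1 - ‖x (t+1)‖^2) := by
      rw [← etele, ← Finset.sum_sub_distrib]
      exact Finset.sum_congr rfl (fun t _ => by ring)
    have hk := key5
    rw [e1, e2] at hk
    linarith [hAT, hAS, hmusum]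
  rw [hsplitT]
  have h2a : (2:ℝ) ≤ 16/α := by
    rw [le_div_iff₀ hα0]
    linarith
  have hrhs : (18 + 8 * L T)/α = 18/α + 8/α * L T := by ring
  have hfrac : (18:ℝ)/α = 16/α + 2/α := by ring
  linarith [hbd1, hbd2, hGTu, h2a]
end

section
/- Let λ ≥ 1 and let (z_t)_{t=1}^T be real costs with z_t² ≤ 4σ_t where σ_t ∈ [0,1]. Let (p_t)_{t=1}^T be the iterates of shrinking-domain online gradient descent with parameter λ, and let (q_t)_{t=1}^T be any valid-in-hindsight sequence. Then Σ_{t=1}^T z_t·(p_t − q_t) ≤ λ·(1 + 3·log(1 + σ_{1:T})). -/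
private lemma clamp_sq_le (m c y : ℝ) (hc0 : 0 ≤ c) (hcm : c ≤ m) :
    (max 0 (min m y) - c) ^ 2 ≤ (y - c) ^ 2 := by
  rcases le_total y 0 with hy | hy
  · rw [min_eq_right (hy.trans (hc0.trans hcm)), max_eq_left hy]
    nlinarith
  · rcases le_total y m with hym | hym
    · rw [min_eq_right hym, max_eq_right hy]
    · rw [min_eq_left hym, max_eq_right (hc0.trans hcm)]
      nlinarith

private lemma log_lb_a (b s : ℝ) (hb : 1 ≤ b) (hs0 : 0 ≤ s) :
    s / (b + s) ≤ Real.log (b + s) - Real.log b := by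
  have hb0 : (0:ℝ) < b := by linarith
  have ha0 : (0:ℝ) < b + s := by linarith
  have h := Real.log_le_sub_one_of_pos (show (0:ℝ) < b / (b + s) by positivity)
  rw [Real.log_div hb0.ne' ha0.ne'] at h
  have h2 : b / (b + s) - 1 = -(s / (b + s)) := by field_simp; ring
  linarith [h2.le, h2.ge]

private lemma log_lb_b (b s : ℝ) (hb : 1 ≤ b) (hs0 : 0 ≤ s) (hs1 : s ≤ 1) :
    s / (2 * b) ≤ Real.log (b + s) - Real.log b := by
  have hb0 : (0:ℝ) < b := by linarith
  have ha0 : (0:ℝ) < b + s := by linarith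
  have hu0 : 0 ≤ s / (2 * b) := by positivity
  have hu2 : s / (2 * b) * (2 * b) = s := by field_simp
  have hu12 : s / (2 * b) ≤ 1 / 2 := by
    rw [div_le_div_iff₀ (by linarith) (by norm_num)]; linarith
  have h1 : (1 - s / (2 * b)) * Real.exp (s / (2 * b)) ≤ 1 := by
    have h2 : 1 - s / (2 * b) ≤ Real.exp (-(s / (2 * b))) := by
      have := Real.add_one_le_exp (-(s / (2 * b))); linarith
    calc (1 - s / (2 * b)) * Real.exp (s / (2 * b))
        ≤ Real.exp (-(s / (2 * b))) * Real.exp (s / (2 * b)) :=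
          mul_le_mul_of_nonneg_right h2 (Real.exp_pos _).le
      _ = 1 := by rw [← Real.exp_add]; simp
  have key : Real.exp (s / (2 * b)) * b ≤ b + s := by
    nlinarith [Real.exp_pos (s / (2 * b)), hu2, h1, hb0, hs0, hs1]
  have h3 : s / (2 * b) ≤ Real.log ((b + s) / b) := by
    rw [Real.le_log_iff_exp_le (by positivity), le_div_iff₀ hb0]
    exact key
  rwa [Real.log_div ha0.ne' hb0.ne'] at h3

private lemma step_bound (lam b s zt pt pt1 qt : ℝ)
    (hlam : 1 ≤ lam) (hb : 1 ≤ b) (hs0 : 0 ≤ s) (hs1 : s ≤ 1)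
    (hz : zt ^ 2 ≤ 4 * s)
    (hq0 : 0 ≤ qt) (hq1 : qt ≤ 1) (hqA : qt ≤ lam / Real.sqrt (b + s))
    (hqB : qt ≤ lam / Real.sqrt b)
    (hp0 : 0 ≤ pt) (hpb : pt ≤ lam / Real.sqrt b)
    (hstep : pt1 = max 0 (min (min 1 (lam / Real.sqrt (b + s)))
      (pt - lam / (b + s) * zt))) :
    zt * (pt - qt) ≤ b * (pt - qt) ^ 2 / (2 * lam)
      - (b + s) * (pt1 - qt) ^ 2 / (2 * lam)
      + 3 * lam * (Real.log (b + s) - Real.log b) := by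
  have hlam0 : (0:ℝ) < lam := by linarith
  have hb0 : (0:ℝ) < b := by linarith
  have ha0 : (0:ℝ) < b + s := by linarith
  have h2lam : (0:ℝ) < 2 * lam := by linarith
  set Y : ℝ := pt - lam / (b + s) * zt - qt with hY
  have halg : zt * (pt - qt)
      = (b + s) * ((pt - qt) ^ 2 - Y ^ 2) / (2 * lam)
        + lam / (2 * (b + s)) * zt ^ 2 := by
    rw [hY]; field_simp; ring
  have hproj : (pt1 - qt) ^ 2 ≤ Y ^ 2 := by
    rw [hstep, hY]
    exact clamp_sq_le _ _ _ hq0 (le_min hq1 hqA)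
  have hsq : (pt - qt) ^ 2 ≤ lam ^ 2 / b := by
    have h := sq_le_sq' (by linarith : -(lam / Real.sqrt b) ≤ pt - qt)
      (by linarith : pt - qt ≤ lam / Real.sqrt b)
    calc (pt - qt) ^ 2 ≤ (lam / Real.sqrt b) ^ 2 := h
      _ = lam ^ 2 / b := by rw [div_pow, Real.sq_sqrt hb0.le]
  have hL1 := log_lb_a b s hb hs0
  have hL2 := log_lb_b b s hb hs0 hs1
  calc zt * (pt - qt)
      = (b + s) * ((pt - qt) ^ 2 - Y ^ 2) / (2 * lam)
        + lam / (2 * (b + s)) * zt ^ 2 := halg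
    _ ≤ (b + s) * ((pt - qt) ^ 2 - (pt1 - qt) ^ 2) / (2 * lam)
        + lam / (2 * (b + s)) * zt ^ 2 := by
        apply add_le_add_left
        apply (div_le_div_iff_of_pos_right h2lam).mpr
        exact mul_le_mul_of_nonneg_left (by linarith) ha0.le
    _ = b * (pt - qt) ^ 2 / (2 * lam) - (b + s) * (pt1 - qt) ^ 2 / (2 * lam)
        + s * (pt - qt) ^ 2 / (2 * lam) + lam / (2 * (b + s)) * zt ^ 2 := by
        ring
    _ ≤ b * (pt - qt) ^ 2 / (2 * lam) - (b + s) * (pt1 - qt) ^ 2 / (2 * lam)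
        + s * (lam ^ 2 / b) / (2 * lam) + lam / (2 * (b + s)) * (4 * s) := by
        apply add_le_add
        · apply add_le_add_right
          apply (div_le_div_iff_of_pos_right h2lam).mpr
          exact mul_le_mul_of_nonneg_left hsq hs0
        · exact mul_le_mul_of_nonneg_left hz (by positivity)
    _ = b * (pt - qt) ^ 2 / (2 * lam) - (b + s) * (pt1 - qt) ^ 2 / (2 * lam)
        + lam * (s / (2 * b)) + 2 * lam * (s / (b + s)) := by
        rw [show s * (lam ^ 2 / b) / (2 * lam) = lam * (s / (2 * b)) by
              field_simp,
            show lam / (2 * (b + s)) * (4 * s) = 2 * lam * (s / (b + s)) by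
              field_simp; ring]
    _ ≤ b * (pt - qt) ^ 2 / (2 * lam) - (b + s) * (pt1 - qt) ^ 2 / (2 * lam)
        + lam * (Real.log (b + s) - Real.log b)
        + 2 * lam * (Real.log (b + s) - Real.log b) := by
        apply add_le_add
        · exact add_le_add_right (mul_le_mul_of_nonneg_left hL2 hlam0.le) _
        · exact mul_le_mul_of_nonneg_left hL1 (by linarith)
    _ = b * (pt - qt) ^ 2 / (2 * lam) - (b + s) * (pt1 - qt) ^ 2 / (2 * lam)
        + 3 * lam * (Real.log (b + s) - Real.log b) := by ring

/-- Theorem 3.2: online gradient descent with a shrinking domain achieves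
regret at most `λ(1 + 3 log(1 + σ_{1:T}))` against every valid-in-hindsight sequence. -/
theorem stmt2 (T : ℕ) (lam : ℝ) (hlam : 1 ≤ lam)
    (z σ : ℕ → ℝ)
    (hσ0 : ∀ t ∈ Finset.Icc 1 T, 0 ≤ σ t)
    (hσ1 : ∀ t ∈ Finset.Icc 1 T, σ t ≤ 1)
    (hz : ∀ t ∈ Finset.Icc 1 T, (z t) ^ 2 ≤ 4 * σ t)
    (p : ℕ → ℝ) (hp1 : p 1 = 0)
    (hp : ∀ t ∈ Finset.Icc 1 T,
      p (t + 1) =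
        max 0 (min (min 1 (lam / Real.sqrt (1 + ∑ s ∈ Finset.Icc 1 t, σ s)))
          (p t - lam / (1 + ∑ s ∈ Finset.Icc 1 t, σ s) * z t)))
    (q : ℕ → ℝ) (S : ℕ) (hS : S ∈ Finset.Icc 1 T) (δ : ℝ)
    (hδ0 : 0 ≤ δ) (hδ1 : δ ≤ 1)
    (hqa : ∀ t ≤ S, q t = δ)
    (hqb : ∀ t, S < t → q t = 0)
    (hδ2 : δ ^ 2 ≤ lam ^ 2 / (1 + ∑ s ∈ Finset.Icc 1 S, σ s)) :
    ∑ t ∈ Finset.Icc 1 T, z t * (p t - q t) ≤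
      lam * (1 + 3 * Real.log (1 + ∑ s ∈ Finset.Icc 1 T, σ s)) := by
  obtain ⟨hS1, hST⟩ := Finset.mem_Icc.mp hS
  have hlam0 : (0:ℝ) < lam := by linarith
  set V : ℕ → ℝ := fun t => 1 + ∑ s ∈ Finset.Icc 1 t, σ s with hVdef
  have hVapp : ∀ t, V t = 1 + ∑ s ∈ Finset.Icc 1 t, σ s := fun _ => rfl
  have hV0 : V 0 = 1 := by simp [hVapp]
  have hVsucc : ∀ t : ℕ, V (t + 1) = V t + σ (t + 1) := by
    intro t
    rw [hVapp, hVapp, Finset.sum_Icc_succ_top (by omega : 1 ≤ t + 1)]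
    ring
  have hV1 : ∀ t, t ≤ T → 1 ≤ V t := by
    intro t ht
    have h : 0 ≤ ∑ s ∈ Finset.Icc 1 t, σ s := by
      apply Finset.sum_nonneg
      intro i hi
      obtain ⟨h1, h2⟩ := Finset.mem_Icc.mp hi
      exact hσ0 i (Finset.mem_Icc.mpr ⟨h1, h2.trans ht⟩)
    rw [hVapp]; linarith
  have hVmono : ∀ a b : ℕ, a ≤ b → b ≤ T → V a ≤ V b := by
    intro a b hab hbT
    rw [hVapp, hVapp]
    have h := Finset.sum_le_sum_of_subset_of_nonneg
      (Finset.Icc_subset_Icc le_rfl hab)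
      (fun i hi _ => by
        obtain ⟨h1, h2⟩ := Finset.mem_Icc.mp hi
        exact hσ0 i (Finset.mem_Icc.mpr ⟨h1, h2.trans hbT⟩))
    linarith
  rw [← hVapp T]
  rw [← hVapp S] at hδ2
  -- δ is bounded by lam / sqrt (V u) for all u ≤ S
  have hδle : ∀ u : ℕ, u ≤ S → δ ≤ lam / Real.sqrt (V u) := by
    intro u hu
    have hVu : 1 ≤ V u := hV1 u (hu.trans hST)
    have h1 : δ ^ 2 ≤ lam ^ 2 / V u := by
      refine hδ2.trans ?_
      apply div_le_div_of_nonneg_left (by positivity) (by linarith)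
      exact hVmono u S hu hST
    calc δ = Real.sqrt (δ ^ 2) := (Real.sqrt_sq hδ0).symm
      _ ≤ Real.sqrt (lam ^ 2 / V u) := Real.sqrt_le_sqrt h1
      _ = lam / Real.sqrt (V u) := by
          rw [Real.sqrt_div (by positivity), Real.sqrt_sq hlam0.le]
  -- p bounds
  have hpfact : ∀ t, t ≤ T → 0 ≤ p (t + 1) ∧ p (t + 1) ≤ lam / Real.sqrt (V t) := by
    intro t ht
    rcases Nat.eq_zero_or_pos t with h | h
    · subst h
      rw [hp1]
      constructor
      · exact le_rfl
      · rw [hV0, Real.sqrt_one]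
        positivity
    · have hmem : t ∈ Finset.Icc 1 T := Finset.mem_Icc.mpr ⟨h, ht⟩
      have hstep := hp t hmem
      rw [← hVapp t] at hstep
      rw [hstep]
      constructor
      · exact le_max_left _ _
      · exact max_le (by positivity)
          ((min_le_left _ _).trans (min_le_right _ _))
  -- q facts
  have hqfact : ∀ t, 1 ≤ t → t ≤ T →
      0 ≤ q t ∧ q t ≤ 1 ∧ q t ≤ lam / Real.sqrt (V t)
        ∧ q t ≤ lam / Real.sqrt (V (t - 1)) := by
    intro t ht1 htT
    rcases le_or_gt t S with h | h
    · rw [hqa t h]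
      exact ⟨hδ0, hδ1, hδle t h, hδle (t - 1) ((Nat.sub_le t 1).trans h)⟩
    · rw [hqb t h]
      refine ⟨le_rfl, zero_le_one, ?_, ?_⟩ <;> positivity
  -- potential function
  set Φ : ℕ → ℝ := fun t => V (t - 1) * (p t - q t) ^ 2 / (2 * lam) with hΦdef
  have hΦapp : ∀ t, Φ t = V (t - 1) * (p t - q t) ^ 2 / (2 * lam) := fun _ => rfl
  clear_value V Φ
  -- key per-step bound
  have key : ∀ t ∈ Finset.Icc 1 T,
      z t * (p t - q t) ≤ Φ t - Φ (t + 1)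
        + 3 * lam * (Real.log (V t) - Real.log (V (t - 1)))
        + (if t = S then lam / 2 else 0) := by
    intro t htmem
    obtain ⟨ht1, htT⟩ := Finset.mem_Icc.mp htmem
    obtain ⟨u, rfl⟩ : ∃ u, t = u + 1 := ⟨t - 1, by omega⟩
    simp only [Nat.add_sub_cancel]
    have huT : u ≤ T := by omega
    have hsu0 : 0 ≤ σ (u + 1) := hσ0 _ htmem
    have hsu1 : σ (u + 1) ≤ 1 := hσ1 _ htmem
    have hzu : z (u + 1) ^ 2 ≤ 4 * σ (u + 1) := hz _ htmem
    have hb1 : 1 ≤ V u := hV1 u huT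
    have ha : V (u + 1) = V u + σ (u + 1) := hVsucc u
    have ha1 : 1 ≤ V (u + 1) := hV1 _ htT
    have hstep := hp (u + 1) htmem
    rw [← hVapp (u + 1)] at hstep
    rw [ha] at hstep
    obtain ⟨hq0, hq1, hqA, hqB⟩ := hqfact (u + 1) ht1 htT
    rw [ha] at hqA
    rw [show u + 1 - 1 = u from rfl] at hqB
    obtain ⟨hp0, hpb⟩ := hpfact u huT
    have sb := step_bound lam (V u) (σ (u + 1)) (z (u + 1)) (p (u + 1))
      (p (u + 2)) (q (u + 1)) hlam hb1 hsu0 hsu1 hzu hq0 hq1 hqA hqB hp0 hpb hstep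
    rw [← ha] at sb
    have hΦ1 : Φ (u + 1) = V u * (p (u + 1) - q (u + 1)) ^ 2 / (2 * lam) := by
      rw [hΦapp]; norm_num
    have hΦ2 : Φ (u + 2) = V (u + 1) * (p (u + 2) - q (u + 2)) ^ 2 / (2 * lam) := by
      rw [hΦapp]; norm_num
    by_cases hts : u + 1 = S
    · -- switching step
      have hq2 : q (u + 2) = 0 := hqb _ (by omega)
      have hq1' : q (u + 1) = δ := hqa _ (by omega)
      have ha0 : (0:ℝ) < V (u + 1) := by linarith
      obtain ⟨hp0', hpb'⟩ := hpfact (u + 1) htT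
      have hp2 : p (u + 2) ^ 2 ≤ lam ^ 2 / V (u + 1) := by
        have h2 : p (u + 2) ^ 2 ≤ (lam / Real.sqrt (V (u + 1))) ^ 2 :=
          sq_le_sq' (by linarith [hp0',
            (by positivity : (0:ℝ) ≤ lam / Real.sqrt (V (u + 1)))]) hpb'
        calc p (u + 2) ^ 2 ≤ (lam / Real.sqrt (V (u + 1))) ^ 2 := h2
          _ = lam ^ 2 / V (u + 1) := by rw [div_pow, Real.sq_sqrt (by linarith)]
      have hVp : V (u + 1) * (lam ^ 2 / V (u + 1)) = lam ^ 2 := by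
        field_simp
      have hfin : V (u + 1) * p (u + 2) ^ 2 ≤
          V (u + 1) * (p (u + 2) - δ) ^ 2 + lam ^ 2 := by
        have a1 := mul_le_mul_of_nonneg_left hp2 ha0.le
        have a2 : 0 ≤ V (u + 1) * (p (u + 2) - δ) ^ 2 :=
          mul_nonneg ha0.le (sq_nonneg _)
        linarith
      have hdiv : V (u + 1) * p (u + 2) ^ 2 / (2 * lam) ≤
          V (u + 1) * (p (u + 2) - δ) ^ 2 / (2 * lam) + lam / 2 := by
        have h := (div_le_div_iff_of_pos_right
          (show (0:ℝ) < 2 * lam by linarith)).mpr hfin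
        rw [add_div, show lam ^ 2 / (2 * lam) = lam / 2 by
          rw [div_eq_div_iff (by linarith) (by norm_num : (2:ℝ) ≠ 0)]; ring] at h
        exact h
      rw [if_pos hts, hΦ1, hΦ2, hq2, hq1', sub_zero]
      rw [hq1'] at sb
      linarith [hdiv]
    · -- non-switching step
      have hqeq : q (u + 2) = q (u + 1) := by
        rcases le_or_gt (u + 1) S with h | h
        · have h' : u + 1 < S := by omega
          rw [hqa (u + 2) (by omega), hqa (u + 1) (by omega)]
        · rw [hqb _ (by omega), hqb _ h]
      rw [if_neg hts]
      rw [hΦ1, hΦ2, hqeq]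
      linarith
  -- summing up
  have hTel1 : ∑ t ∈ Finset.Icc 1 T, (Φ t - Φ (t + 1)) = Φ 1 - Φ (T + 1) := by
    rw [← Finset.Ico_add_one_right_eq_Icc, Finset.sum_Ico_eq_sum_range]
    simp only [Nat.add_sub_cancel]
    have h1 : ∀ i ∈ Finset.range T,
        Φ (1 + i) - Φ (1 + i + 1) = Φ (i + 1) - Φ (i + 1 + 1) := by
      intro i _
      rw [add_comm 1 i]
    rw [Finset.sum_congr rfl h1, Finset.sum_range_sub' (fun i => Φ (i + 1)) T]
  have hTel2 : ∑ t ∈ Finset.Icc 1 T,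
      (Real.log (V t) - Real.log (V (t - 1))) = Real.log (V T) := by
    rw [← Finset.Ico_add_one_right_eq_Icc, Finset.sum_Ico_eq_sum_range]
    simp only [Nat.add_sub_cancel]
    have h1 : ∀ i ∈ Finset.range T,
        Real.log (V (1 + i)) - Real.log (V (1 + i - 1))
          = Real.log (V (i + 1)) - Real.log (V i) := by
      intro i _
      rw [show 1 + i - 1 = i from by omega, show 1 + i = i + 1 from by omega]
    rw [Finset.sum_congr rfl h1,
      Finset.sum_range_sub (fun i => Real.log (V i)) T, hV0, Real.log_one,
      sub_zero]
  have hIte : ∑ t ∈ Finset.Icc 1 T, (if t = S then lam / 2 else 0) = lam / 2 := by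
    rw [Finset.sum_ite_eq' (Finset.Icc 1 T) S (fun _ => lam / 2), if_pos hS]
  have hsum : ∑ t ∈ Finset.Icc 1 T, z t * (p t - q t)
      ≤ Φ 1 - Φ (T + 1) + 3 * lam * Real.log (V T) + lam / 2 := by
    calc ∑ t ∈ Finset.Icc 1 T, z t * (p t - q t)
        ≤ ∑ t ∈ Finset.Icc 1 T, (Φ t - Φ (t + 1)
            + 3 * lam * (Real.log (V t) - Real.log (V (t - 1)))
            + (if t = S then lam / 2 else 0)) := Finset.sum_le_sum key
      _ = (∑ t ∈ Finset.Icc 1 T, (Φ t - Φ (t + 1)))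
            + 3 * lam * (∑ t ∈ Finset.Icc 1 T,
                (Real.log (V t) - Real.log (V (t - 1))))
            + (∑ t ∈ Finset.Icc 1 T, (if t = S then lam / 2 else 0)) := by
          rw [Finset.sum_add_distrib, Finset.sum_add_distrib, Finset.mul_sum]
      _ = Φ 1 - Φ (T + 1) + 3 * lam * Real.log (V T) + lam / 2 := by
          rw [hTel1, hTel2, hIte]
  have hΦ1b : Φ 1 ≤ lam / 2 := by
    rw [hΦapp, show (1:ℕ) - 1 = 0 from by norm_num, hV0, hp1, hqa 1 hS1]
    have hd2 : δ ^ 2 ≤ lam ^ 2 := by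
      refine hδ2.trans ?_
      exact div_le_self (by positivity) (hV1 S hST)
    have h := (div_le_div_iff_of_pos_right
      (show (0:ℝ) < 2 * lam by linarith)).mpr
      (show (1:ℝ) * (0 - δ) ^ 2 ≤ lam ^ 2 by nlinarith)
    rw [show lam ^ 2 / (2 * lam) = lam / 2 by
      rw [div_eq_div_iff (by linarith) (by norm_num : (2:ℝ) ≠ 0)]; ring] at h
    exact h
  have hΦTb : 0 ≤ Φ (T + 1) := by
    rw [hΦapp, Nat.add_sub_cancel]
    have := hV1 T le_rfl
    positivity
  have hring : lam * (1 + 3 * Real.log (V T))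
      = lam + 3 * lam * Real.log (V T) := by ring
  linarith [hsum, hΦ1b, hΦTb]
end

section
/- Let α ∈ (0,1] and let x_1, …, x_{T+1} be the adaptive FTRL iterates for cost vectors c_1, …, c_T. Let S ∈ {1,…,T} satisfy ‖c_{1:S}‖ ≤ (α/4)·(1 + σ_{1:S}) and √(1 + σ_{1:S}) ≥ 10/α, and suppose Δ := √(1 + σ_{1:S})/2 + ‖c_{1:S}‖ + Σ_{t=1}^S ⟨c_t, x_t⟩ > 1. Then α·σ_{1:S} + Σ_{t=1}^S ⟨c_t, x_t⟩ ≥ (α/2)·(1 + σ_{1:S}). -/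
open RealInnerProductSpace

/-- The Claim inside the proof of Lemma 3.4: if
`‖c_{1:S}‖ ≤ (α/4)(1+σ_{1:S})`, `√(1+σ_{1:S}) ≥ 10/α`, and
`Δ = √(1+σ_{1:S})/2 + ‖c_{1:S}‖ + Σ_{t≤S}⟨c_t,x_t⟩ > 1`, then
`α·σ_{1:S} + Σ_{t≤S}⟨c_t,x_t⟩ ≥ (α/2)(1+σ_{1:S})`. -/
theorem stmt7 {d T : ℕ} (α : ℝ) (hα0 : 0 < α) (hα1 : α ≤ 1)
    (c x : ℕ → Vec d)
    (hc : ∀ t ∈ Finset.Icc 1 T, ‖c t‖ ≤ 1)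
    (hx1 : x 1 = 0)
    (hxball : ∀ t ∈ Finset.Icc 1 T, ‖x (t + 1)‖ ≤ 1)
    (hxmin : ∀ t ∈ Finset.Icc 1 T, ∀ y : Vec d, ‖y‖ ≤ 1 →
      ⟪(∑ s ∈ Finset.Icc 1 t, c s), x (t + 1)⟫ +
          Real.sqrt (1 + ∑ s ∈ Finset.Icc 1 t, ‖c s‖ ^ 2) / 2 * ‖x (t + 1)‖ ^ 2 ≤
        ⟪(∑ s ∈ Finset.Icc 1 t, c s), y⟫ +
          Real.sqrt (1 + ∑ s ∈ Finset.Icc 1 t, ‖c s‖ ^ 2) / 2 * ‖y‖ ^ 2)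
    (S : ℕ) (hS : S ∈ Finset.Icc 1 T)
    (hsmall : ‖∑ s ∈ Finset.Icc 1 S, c s‖ ≤
      α / 4 * (1 + ∑ s ∈ Finset.Icc 1 S, ‖c s‖ ^ 2))
    (hbig : 10 / α ≤ Real.sqrt (1 + ∑ s ∈ Finset.Icc 1 S, ‖c s‖ ^ 2))
    (hΔ : 1 < Real.sqrt (1 + ∑ s ∈ Finset.Icc 1 S, ‖c s‖ ^ 2) / 2 +
      ‖∑ s ∈ Finset.Icc 1 S, c s‖ + ∑ t ∈ Finset.Icc 1 S, ⟪c t, x t⟫) :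
    α / 2 * (1 + ∑ s ∈ Finset.Icc 1 S, ‖c s‖ ^ 2) ≤
      α * (∑ s ∈ Finset.Icc 1 S, ‖c s‖ ^ 2) + ∑ t ∈ Finset.Icc 1 S, ⟪c t, x t⟫ := by
  set σ := ∑ s ∈ Finset.Icc 1 S, ‖c s‖ ^ 2 with hσ
  set C := ‖∑ s ∈ Finset.Icc 1 S, c s‖ with hC
  set P := ∑ t ∈ Finset.Icc 1 S, ⟪c t, x t⟫ with hP
  set R := Real.sqrt (1 + σ) with hR
  have hσ0 : 0 ≤ σ := Finset.sum_nonneg fun s _ => sq_nonneg _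
  have hR2 : R ^ 2 = 1 + σ := Real.sq_sqrt (by linarith)
  have hR0 : 0 ≤ R := Real.sqrt_nonneg _
  have h10 : 10 ≤ α * R := by
    rw [hR]
    have := (div_le_iff₀ hα0).mp hbig
    linarith
  nlinarith [mul_nonneg hα0.le hR0, mul_nonneg (mul_nonneg hα0.le hα0.le) hR0,
    mul_le_mul_of_nonneg_right h10 hR0, sq_nonneg (α * R - 10)]
end

section
/- Let ψ_t(x) = ⟨c_t, x⟩ + (r_t/2)‖x‖² for t = 0,1,…,T, where c_0 = 0, r_0 = 1, and r_t = √(1+σ_{1:t}) − √(1+σ_{1:t−1}) for t ≥ 1, and let x_{t+1} = argmin over {‖x‖ ≤ 1} of ψ_{0:t}(x) = Σ_{s=0}^t ψ_s(x). Then for every m ∈ {0, 1, …, T} and every u ∈ ℝ^d with ‖u‖ ≤ 1: ψ_{0:m}(x_{m+1}) + Σ_{t=m+1}^T ψ_t(x_{t+1}) ≤ ψ_{0:T}(u). -/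
open RealInnerProductSpace

/-- Lemma B.1 (the generalized FTL lemma): with
`ψ_t(x) = ⟨c_t, x⟩ + (r_t/2)‖x‖²` (where `c_0 = 0`, `r_0 = 1`,
`r_t = √(1+σ_{1:t}) − √(1+σ_{1:t−1})`) and `x_{t+1} = argmin_{‖x‖≤1} ψ_{0:t}(x)`,
for every `m ≤ T` and every `u` in the unit ball,
`ψ_{0:m}(x_{m+1}) + Σ_{t=m+1}^T ψ_t(x_{t+1}) ≤ ψ_{0:T}(u)`. -/
theorem stmt13 {d T : ℕ} (c x : ℕ → Vec d)
    (hc0 : c 0 = 0)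
    (hc : ∀ t ∈ Finset.Icc 1 T, ‖c t‖ ≤ 1)
    (r : ℕ → ℝ) (hr0 : r 0 = 1)
    (hr : ∀ t ∈ Finset.Icc 1 T,
      r t = Real.sqrt (1 + ∑ s ∈ Finset.Icc 1 t, ‖c s‖ ^ 2) -
        Real.sqrt (1 + ∑ s ∈ Finset.Icc 1 (t - 1), ‖c s‖ ^ 2))
    (ψ : ℕ → Vec d → ℝ)
    (hψ : ∀ t y, ψ t y = ⟪c t, y⟫ + r t / 2 * ‖y‖ ^ 2)
    (hxball : ∀ t ≤ T, ‖x (t + 1)‖ ≤ 1)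
    (hxmin : ∀ t ≤ T, ∀ y : Vec d, ‖y‖ ≤ 1 →
      ∑ s ∈ Finset.range (t + 1), ψ s (x (t + 1)) ≤ ∑ s ∈ Finset.range (t + 1), ψ s y)
    (m : ℕ) (hm : m ≤ T) (u : Vec d) (hu : ‖u‖ ≤ 1) :
    ∑ s ∈ Finset.range (m + 1), ψ s (x (m + 1)) +
        ∑ t ∈ Finset.Icc (m + 1) T, ψ t (x (t + 1)) ≤
      ∑ t ∈ Finset.range (T + 1), ψ t u := by
  obtain ⟨k, hk⟩ : ∃ k, m + k = T := ⟨T - m, Nat.add_sub_cancel' hm⟩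
  clear hm
  induction k generalizing m with
  | zero =>
    subst hk
    simp only [Nat.add_zero]
    rw [Finset.Icc_eq_empty (by omega), Finset.sum_empty, add_zero]
    exact hxmin m le_rfl u hu
  | succ k ih =>
    have hmT : m + 1 ≤ T := by omega
    have h1 : Finset.Icc (m + 1) T = insert (m + 1) (Finset.Icc (m + 2) T) := by
      ext a; simp [Finset.mem_Icc, Finset.mem_insert]; omega
    rw [h1, Finset.sum_insert (by simp)]
    have h2 : ∑ s ∈ Finset.range (m + 1), ψ s (x (m + 1)) ≤
        ∑ s ∈ Finset.range (m + 1), ψ s (x (m + 2)) :=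
      hxmin m (by omega) (x (m + 2)) (hxball (m + 1) hmT)
    have h3 := ih (m + 1) (by omega)
    rw [Finset.sum_range_succ] at h3
    linarith
end

section
/- Let x_1, …, x_{T+1} be the adaptive FTRL iterates for cost vectors c_1, …, c_T. Then for every t ∈ {1,…,T}: ‖x_t − x_{t+1}‖ ≤ 2‖c_t‖ / √(1 + σ_{1:t−1}). -/
open RealInnerProductSpace

lemma expand {d : ℕ} (L xx Δ : Vec d) (η l : ℝ) :
    ⟪L, xx + l • Δ⟫ + η / 2 * ‖xx + l • Δ‖ ^ 2 =
      (⟪L, xx⟫ + η / 2 * ‖xx‖ ^ 2) + l * (⟪L, Δ⟫ + η * ⟪xx, Δ⟫)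
        + l ^ 2 * (η / 2 * ‖Δ‖ ^ 2) := by
  have h1 : ‖xx + l • Δ‖ ^ 2 = ‖xx‖ ^ 2 + 2 * ⟪xx, l • Δ⟫ + ‖l • Δ‖ ^ 2 :=
    norm_add_sq_real xx (l • Δ)
  have h2 : ⟪xx, l • Δ⟫ = l * ⟪xx, Δ⟫ := real_inner_smul_right _ _ _
  have h3 : ‖l • Δ‖ ^ 2 = l ^ 2 * ‖Δ‖ ^ 2 := by
    rw [norm_smul, mul_pow, Real.norm_eq_abs, sq_abs]
  have h4 : ⟪L, xx + l • Δ⟫ = ⟪L, xx⟫ + l * ⟪L, Δ⟫ := by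
    rw [inner_add_right, real_inner_smul_right]
  rw [h1, h2, h3, h4]; ring

lemma key {d : ℕ} (L xx z : Vec d) (η : ℝ) (hη : 0 < η) (hx : ‖xx‖ ≤ 1) (hz : ‖z‖ ≤ 1)
    (hmin : ∀ y : Vec d, ‖y‖ ≤ 1 →
      ⟪L, xx⟫ + η / 2 * ‖xx‖ ^ 2 ≤ ⟪L, y⟫ + η / 2 * ‖y‖ ^ 2) :
    ⟪L, xx⟫ + η / 2 * ‖xx‖ ^ 2 + η / 2 * ‖z - xx‖ ^ 2 ≤ ⟪L, z⟫ + η / 2 * ‖z‖ ^ 2 := by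
  set Δ := z - xx with hΔ
  set g : ℝ := ⟪L, Δ⟫ + η * ⟪xx, Δ⟫ with hg
  set h : ℝ := η / 2 * ‖Δ‖ ^ 2 with hh
  have hh0 : 0 ≤ h := by positivity
  have hlg : ∀ l : ℝ, 0 < l → l ≤ 1 → -(l * h) ≤ g := by
    intro l hl0 hl1
    have hball : ‖xx + l • Δ‖ ≤ 1 := by
      have : xx + l • Δ = (1 - l) • xx + l • z := by
        rw [hΔ]; module
      rw [this]
      calc ‖(1 - l) • xx + l • z‖ ≤ ‖(1 - l) • xx‖ + ‖l • z‖ := norm_add_le _ _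
        _ = (1 - l) * ‖xx‖ + l * ‖z‖ := by
            rw [norm_smul, norm_smul, Real.norm_eq_abs, Real.norm_eq_abs,
              abs_of_nonneg (by linarith), abs_of_nonneg hl0.le]
        _ ≤ (1 - l) * 1 + l * 1 := by
            have h1 : (1 - l) * ‖xx‖ ≤ (1 - l) * 1 :=
              mul_le_mul_of_nonneg_left hx (by linarith)
            have h2 : l * ‖z‖ ≤ l * 1 := mul_le_mul_of_nonneg_left hz hl0.le
            linarith
        _ = 1 := by ring
    have := hmin (xx + l • Δ) hball
    rw [expand] at this
    nlinarith [this, sq_nonneg l]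
  have hg0 : 0 ≤ g := by
    by_contra hgneg
    push_neg at hgneg
    have hl0 : (0:ℝ) < min 1 (-g / (2 * (h + 1))) :=
      lt_min one_pos (div_pos (by linarith) (by positivity))
    have := hlg _ hl0 (min_le_left _ _)
    have h2 : min 1 (-g / (2 * (h + 1))) * (h + 1) ≤ -g / 2 := by
      rw [← le_div_iff₀ (by positivity)]
      calc min 1 (-g / (2 * (h + 1))) ≤ -g / (2 * (h + 1)) := min_le_right _ _
        _ = -g / 2 / (h + 1) := (div_div _ _ _).symm
    nlinarith [hl0, this, h2]
  have hz' : z = xx + (1:ℝ) • Δ := by rw [hΔ]; module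
  have := expand L xx Δ η 1
  rw [← hz'] at this
  rw [this, ← hg, ← hh]
  nlinarith [hg0]

set_option maxHeartbeats 1000000 in
/-- First part of Proposition B.2 (stability of FTRL): for every
`t ∈ {1,…,T}`, `‖x_t − x_{t+1}‖ ≤ 2‖c_t‖/√(1 + σ_{1:t−1})`. -/
theorem stmt14 {d T : ℕ} (c x : ℕ → Vec d)
    (hc : ∀ t ∈ Finset.Icc 1 T, ‖c t‖ ≤ 1)
    (hx1 : x 1 = 0)
    (hxball : ∀ t ∈ Finset.Icc 1 T, ‖x (t + 1)‖ ≤ 1)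
    (hxmin : ∀ t ∈ Finset.Icc 1 T, ∀ y : Vec d, ‖y‖ ≤ 1 →
      ⟪(∑ s ∈ Finset.Icc 1 t, c s), x (t + 1)⟫ +
          Real.sqrt (1 + ∑ s ∈ Finset.Icc 1 t, ‖c s‖ ^ 2) / 2 * ‖x (t + 1)‖ ^ 2 ≤
        ⟪(∑ s ∈ Finset.Icc 1 t, c s), y⟫ +
          Real.sqrt (1 + ∑ s ∈ Finset.Icc 1 t, ‖c s‖ ^ 2) / 2 * ‖y‖ ^ 2)
    (t : ℕ) (ht : t ∈ Finset.Icc 1 T) :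
    ‖x t - x (t + 1)‖ ≤
      2 * ‖c t‖ / Real.sqrt (1 + ∑ s ∈ Finset.Icc 1 (t - 1), ‖c s‖ ^ 2) := by
  obtain ⟨ht1, htT⟩ := Finset.mem_Icc.mp ht
  obtain ⟨n, rfl⟩ : ∃ n, t = n + 1 := ⟨t - 1, by omega⟩
  simp only [Nat.add_sub_cancel]
  set S0 : ℝ := ∑ s ∈ Finset.Icc 1 n, ‖c s‖ ^ 2 with hS0def
  set L0 : Vec d := ∑ s ∈ Finset.Icc 1 n, c s with hL0def
  set a : ℝ := ‖c (n + 1)‖ with hadef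
  set η0 : ℝ := Real.sqrt (1 + S0) with hη0def
  set η1 : ℝ := Real.sqrt (1 + ∑ s ∈ Finset.Icc 1 (n + 1), ‖c s‖ ^ 2) with hη1def
  have hS0 : 0 ≤ S0 := Finset.sum_nonneg fun s _ => sq_nonneg _
  have hη0sq : η0 ^ 2 = 1 + S0 := Real.sq_sqrt (by linarith)
  have hη0one : 1 ≤ η0 := by
    nlinarith [Real.sqrt_nonneg (1 + S0), hη0sq]
  have hη0pos : 0 < η0 := by linarith
  have ha0 : 0 ≤ a := norm_nonneg _
  -- sum splitting
  have hsum : ∑ s ∈ Finset.Icc 1 (n + 1), ‖c s‖ ^ 2 = S0 + a ^ 2 :=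
    Finset.sum_Icc_succ_top (by omega) _
  have hLsum : ∑ s ∈ Finset.Icc 1 (n + 1), c s = L0 + c (n + 1) :=
    Finset.sum_Icc_succ_top (by omega) _
  -- η1 bounds
  have hη1le : η1 ≤ η0 + a ^ 2 / (2 * η0) := by
    have hb : 0 ≤ a ^ 2 / (2 * η0) := div_nonneg (sq_nonneg a) (by linarith)
    have e : 2 * η0 * (a ^ 2 / (2 * η0)) = a ^ 2 := by
      rw [mul_comm]
      exact div_mul_cancel₀ _ (ne_of_gt (by linarith))
    have h1 : 1 + (S0 + a ^ 2) ≤ (η0 + a ^ 2 / (2 * η0)) ^ 2 := by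
      nlinarith [sq_nonneg (a ^ 2 / (2 * η0))]
    calc η1 = Real.sqrt (1 + (S0 + a ^ 2)) := by rw [hη1def, hsum]
      _ ≤ Real.sqrt ((η0 + a ^ 2 / (2 * η0)) ^ 2) := Real.sqrt_le_sqrt h1
      _ = η0 + a ^ 2 / (2 * η0) := Real.sqrt_sq (by linarith)
  have hη0η1 : η0 ≤ η1 := by
    rw [hη0def, hη1def, hsum]
    exact Real.sqrt_le_sqrt (by nlinarith [sq_nonneg a])
  have hη1pos : 0 < η1 := lt_of_lt_of_le hη0pos hη0η1
  -- norm facts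
  have hxt1ball : ‖x (n + 1 + 1)‖ ≤ 1 := hxball (n + 1) ht
  have hxtball : ‖x (n + 1)‖ ≤ 1 := by
    rcases Nat.eq_zero_or_pos n with h2 | h2
    · simp [h2, hx1]
    · exact hxball n (Finset.mem_Icc.mpr ⟨by omega, by omega⟩)
  -- inequality A: x (n+1) is the minimizer of the step-n objective
  have hA : ⟪L0, x (n + 1)⟫ + η0 / 2 * ‖x (n + 1)‖ ^ 2
        + η0 / 2 * ‖x (n + 1 + 1) - x (n + 1)‖ ^ 2 ≤
      ⟪L0, x (n + 1 + 1)⟫ + η0 / 2 * ‖x (n + 1 + 1)‖ ^ 2 := by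
    rcases Nat.eq_zero_or_pos n with h2 | h2
    · subst h2
      have hL00 : L0 = 0 := by simp [hL0def]
      have hS00 : S0 = 0 := by simp [hS0def]
      have hη01 : η0 = 1 := by rw [hη0def, hS00]; simp
      rw [hL00, hη01, hx1]
      simp [inner_zero_left]
    · have hm : n ∈ Finset.Icc 1 T := Finset.mem_Icc.mpr ⟨by omega, by omega⟩
      exact key L0 (x (n + 1)) (x (n + 1 + 1)) η0 hη0pos hxtball hxt1ball
        (hxmin n hm)
  -- inequality B: x (n+2) is the minimizer of the step-(n+1) objective
  have hB : ⟪L0 + c (n + 1), x (n + 1 + 1)⟫ + η1 / 2 * ‖x (n + 1 + 1)‖ ^ 2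
        + η1 / 2 * ‖x (n + 1) - x (n + 1 + 1)‖ ^ 2 ≤
      ⟪L0 + c (n + 1), x (n + 1)⟫ + η1 / 2 * ‖x (n + 1)‖ ^ 2 := by
    have hmin' := hxmin (n + 1) ht
    rw [hLsum] at hmin'
    exact key (L0 + c (n + 1)) (x (n + 1 + 1)) (x (n + 1)) η1 hη1pos
      hxt1ball hxtball hmin'
  set D : ℝ := ‖x (n + 1) - x (n + 1 + 1)‖ with hDdef
  have hD0 : 0 ≤ D := norm_nonneg _
  have hrev : ‖x (n + 1 + 1) - x (n + 1)‖ = D := norm_sub_rev _ _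
  rw [hrev] at hA
  have hBL : ⟪L0 + c (n + 1), x (n + 1 + 1)⟫
      = ⟪L0, x (n + 1 + 1)⟫ + ⟪c (n + 1), x (n + 1 + 1)⟫ := inner_add_left _ _ _
  have hBR : ⟪L0 + c (n + 1), x (n + 1)⟫
      = ⟪L0, x (n + 1)⟫ + ⟪c (n + 1), x (n + 1)⟫ := inner_add_left _ _ _
  rw [hBL, hBR] at hB
  have hip : ⟪c (n + 1), x (n + 1)⟫ - ⟪c (n + 1), x (n + 1 + 1)⟫ ≤ a * D := by
    rw [← inner_sub_right]
    exact real_inner_le_norm _ _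
  have hxt2 : ‖x (n + 1)‖ ^ 2 ≤ 1 := by nlinarith [norm_nonneg (x (n + 1))]
  have hnn : 0 ≤ ‖x (n + 1 + 1)‖ ^ 2 := sq_nonneg _
  have hcross : (η1 - η0) / 2 * (‖x (n + 1)‖ ^ 2 - ‖x (n + 1 + 1)‖ ^ 2)
      ≤ (η1 - η0) / 2 := by
    nlinarith [hη0η1, hxt2, hnn]
  have hmain : η0 * D ^ 2 ≤ a * D + a ^ 2 / (4 * η0) := by
    have hd : (η1 - η0) / 2 ≤ a ^ 2 / (4 * η0) := by
      have h4 : a ^ 2 / (2 * η0) / 2 = a ^ 2 / (4 * η0) := by ring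
      linarith [hη1le]
    linarith [hA, hB, hip, hcross, hd,
      mul_nonneg (sub_nonneg.2 hη0η1) (sq_nonneg D)]
  -- finish
  rw [le_div_iff₀ hη0pos]
  have e2 : η0 * (a ^ 2 / (4 * η0)) = a ^ 2 / 4 := by
    rw [mul_div_assoc', mul_comm η0 (a ^ 2)]
    exact mul_div_mul_right _ _ (ne_of_gt hη0pos)
  nlinarith [mul_le_mul_of_nonneg_left hmain hη0pos.le, e2, hD0, ha0, hη0pos,
    mul_nonneg (mul_nonneg hη0pos.le hD0) ha0, sq_nonneg (η0 * D - 2 * a),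
    sq_nonneg (η0 * D + a)]
end

section
/- Let x_1, …, x_{T+1} be the adaptive FTRL iterates for cost vectors c_1, …, c_T. Then for every interval 1 ≤ A ≤ B ≤ T: Σ_{t=A}^B ⟨c_t, x_t − x_{t+1}⟩ ≤ 4·(√(σ_{1:B}) − √(σ_{1:A−1})). -/
set_option maxHeartbeats 1000000

open RealInnerProductSpace

/-- Strong-convexity property of the constrained minimizer. -/
lemma strong_min {d : ℕ} (g x : Vec d) (η : ℝ) (hη : 0 < η)
    (hx : ‖x‖ ≤ 1)
    (hmin : ∀ y : Vec d, ‖y‖ ≤ 1 →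
      ⟪g, x⟫ + η / 2 * ‖x‖ ^ 2 ≤ ⟪g, y⟫ + η / 2 * ‖y‖ ^ 2)
    (y : Vec d) (hy : ‖y‖ ≤ 1) :
    ⟪g, x⟫ + η / 2 * ‖x‖ ^ 2 + η / 2 * ‖y - x‖ ^ 2 ≤ ⟪g, y⟫ + η / 2 * ‖y‖ ^ 2 := by
  set w : Vec d := y - x with hw
  have hxw : x + w = y := by simp [hw]
  have hK : 0 ≤ ⟪g, w⟫ + η * ⟪x, w⟫ := by
    by_contra hneg
    push_neg at hneg
    set K : ℝ := ⟪g, w⟫ + η * ⟪x, w⟫ with hKdef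
    set M : ℝ := η / 2 * ‖w‖ ^ 2 with hMdef
    have hM0 : 0 ≤ M := by positivity
    set l : ℝ := min 1 ((-K) / (2 * (M + 1))) with hldef
    have hl0 : 0 < l := lt_min one_pos (div_pos (neg_pos.2 hneg) (by positivity))
    have hl1 : l ≤ 1 := min_le_left _ _
    have hzeq : x + l • w = (1 - l) • x + l • y := by
      simp only [hw, smul_sub, sub_smul, one_smul]
      abel
    have hz1 : ‖x + l • w‖ ≤ 1 := by
      rw [hzeq]
      calc ‖(1 - l) • x + l • y‖ ≤ ‖(1 - l) • x‖ + ‖l • y‖ := norm_add_le _ _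
        _ = |1 - l| * ‖x‖ + |l| * ‖y‖ := by rw [norm_smul, norm_smul]; simp [Real.norm_eq_abs]
        _ = (1 - l) * ‖x‖ + l * ‖y‖ := by
            rw [abs_of_nonneg (by linarith), abs_of_nonneg hl0.le]
        _ ≤ (1 - l) * 1 + l * 1 :=
            add_le_add (mul_le_mul_of_nonneg_left hx (by linarith))
              (mul_le_mul_of_nonneg_left hy hl0.le)
        _ = 1 := by ring
    have hexp := hmin (x + l • w) hz1
    have e1 : ⟪g, x + l • w⟫ = ⟪g, x⟫ + l * ⟪g, w⟫ := by
      rw [inner_add_right, real_inner_smul_right]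
    have e2 : ‖x + l • w‖ ^ 2 = ‖x‖ ^ 2 + 2 * (l * ⟪x, w⟫) + l ^ 2 * ‖w‖ ^ 2 := by
      rw [norm_add_sq_real, real_inner_smul_right, norm_smul]
      rw [Real.norm_eq_abs, abs_of_nonneg hl0.le]
      ring
    rw [e1, e2] at hexp
    have hlin : 0 ≤ l * (K + l * M) := by
      simp only [hKdef, hMdef]
      nlinarith [hexp]
    have hKlM : 0 ≤ K + l * M := (mul_nonneg_iff_of_pos_left hl0).mp hlin
    have hlM : l * M ≤ -K / 2 := by
      have h1 : l * M ≤ ((-K) / (2 * (M + 1))) * M :=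
        mul_le_mul_of_nonneg_right (min_le_right _ _) hM0
      have h2 : ((-K) / (2 * (M + 1))) * M ≤ -K / 2 := by
        rw [div_mul_eq_mul_div, div_le_div_iff₀ (by positivity) (by norm_num)]
        nlinarith
      linarith
    linarith
  have e1 : ⟪g, y⟫ = ⟪g, x⟫ + ⟪g, w⟫ := by
    rw [← hxw, inner_add_right]
  have e2 : ‖y‖ ^ 2 = ‖x‖ ^ 2 + 2 * ⟪x, w⟫ + ‖w‖ ^ 2 := by
    rw [← hxw, norm_add_sq_real]
  rw [e1, e2]
  nlinarith [hK]

/-- Pure-real arithmetic core. -/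
lemma arith (S1 q r I : ℝ) (hS1 : 0 ≤ S1) (hq0 : 0 ≤ q) (hr0 : 0 ≤ r)
    (hcs : I ≤ q * r)
    (main : (Real.sqrt (1 + S1) + Real.sqrt (1 + (S1 + q ^ 2))) / 2 * r ^ 2 ≤
      q * r + (Real.sqrt (1 + (S1 + q ^ 2)) - Real.sqrt (1 + S1)) / 2) :
    I ≤ 4 * (Real.sqrt (S1 + q ^ 2) - Real.sqrt S1) := by
  set η1 : ℝ := Real.sqrt (1 + S1) with hη1
  set η2 : ℝ := Real.sqrt (1 + (S1 + q ^ 2)) with hη2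
  have hη1sq : η1 ^ 2 = 1 + S1 := Real.sq_sqrt (by linarith)
  have hη2sq : η2 ^ 2 = 1 + (S1 + q ^ 2) := Real.sq_sqrt (by positivity)
  have hη1nn : 0 ≤ η1 := Real.sqrt_nonneg _
  have hη2nn : 0 ≤ η2 := Real.sqrt_nonneg _
  have hη1pos : (1:ℝ) ≤ η1 := by nlinarith
  have hη2pos : (1:ℝ) ≤ η2 := by nlinarith
  have hη12 : η1 ≤ η2 := Real.sqrt_le_sqrt (by nlinarith)
  have h4 : ((η1 + η2) * r - q) ^ 2 ≤ 2 * q ^ 2 := by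
    nlinarith [mul_le_mul_of_nonneg_left main (by linarith : (0:ℝ) ≤ 2 * (η1 + η2)),
      hη1sq, hη2sq]
  have h5 : (η1 + η2) * r - q ≤ Real.sqrt 2 * q := by
    have hh := Real.sqrt_le_sqrt h4
    rw [Real.sqrt_sq_eq_abs] at hh
    have h2q : Real.sqrt (2 * q ^ 2) = Real.sqrt 2 * q := by
      rw [Real.sqrt_mul (by norm_num), Real.sqrt_sq hq0]
    rw [h2q] at hh
    exact le_trans (le_abs_self _) hh
  have hsqrt2 : Real.sqrt 2 ≤ 2 := by
    nlinarith [Real.sq_sqrt (by norm_num : (0:ℝ) ≤ 2), Real.sqrt_nonneg 2]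
  set u : ℝ := Real.sqrt S1 with hu
  set v : ℝ := Real.sqrt (S1 + q ^ 2) with hv
  have hu0 : 0 ≤ u := Real.sqrt_nonneg _
  have hv0 : 0 ≤ v := Real.sqrt_nonneg _
  have huv : u ≤ v := Real.sqrt_le_sqrt (by nlinarith)
  have husq : u ^ 2 = S1 := Real.sq_sqrt hS1
  have hvsq : v ^ 2 = S1 + q ^ 2 := Real.sq_sqrt (by positivity)
  have huη : u ≤ η1 := Real.sqrt_le_sqrt (by linarith)
  have hvη : v ≤ η2 := Real.sqrt_le_sqrt (by linarith)
  have hA : (η1 + η2) * r ≤ 3 * q := by nlinarith [mul_le_mul_of_nonneg_right hsqrt2 hq0]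
  have hB : u + v ≤ η1 + η2 := by linarith
  have hqr : 0 ≤ q * r := mul_nonneg hq0 hr0
  have hstep : (u + v) * (q * r) ≤ 3 * q ^ 2 := by
    nlinarith [mul_le_mul_of_nonneg_left hA hq0, mul_le_mul_of_nonneg_right hB hqr]
  rcases eq_or_lt_of_le (add_nonneg hu0 hv0) with h0 | hpos
  · have hq2 : q ^ 2 = 0 := by nlinarith
    have hq' : q = 0 := by nlinarith
    nlinarith
  · have hfin : q * r ≤ 4 * (v - u) := by
      have h6 : (q * r) * (u + v) ≤ (4 * (v - u)) * (u + v) := by nlinarith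
      exact (mul_le_mul_iff_of_pos_right hpos).mp h6
    linarith

/-- Per-step stability bound. -/
lemma step_bound_s15 {d : ℕ} (g1 ct xt xt1 : Vec d) (S1 : ℝ) (hS1 : 0 ≤ S1)
    (hxt : ‖xt‖ ≤ 1) (hxt1 : ‖xt1‖ ≤ 1)
    (hmin1 : ∀ y : Vec d, ‖y‖ ≤ 1 →
      ⟪g1, xt⟫ + Real.sqrt (1 + S1) / 2 * ‖xt‖ ^ 2 ≤
        ⟪g1, y⟫ + Real.sqrt (1 + S1) / 2 * ‖y‖ ^ 2)
    (hmin2 : ∀ y : Vec d, ‖y‖ ≤ 1 →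
      ⟪g1 + ct, xt1⟫ + Real.sqrt (1 + (S1 + ‖ct‖ ^ 2)) / 2 * ‖xt1‖ ^ 2 ≤
        ⟪g1 + ct, y⟫ + Real.sqrt (1 + (S1 + ‖ct‖ ^ 2)) / 2 * ‖y‖ ^ 2) :
    ⟪ct, xt - xt1⟫ ≤ 4 * (Real.sqrt (S1 + ‖ct‖ ^ 2) - Real.sqrt S1) := by
  have h1 := strong_min g1 xt (Real.sqrt (1 + S1))
    (Real.sqrt_pos.mpr (by linarith)) hxt hmin1 xt1 hxt1
  have h2 := strong_min (g1 + ct) xt1 (Real.sqrt (1 + (S1 + ‖ct‖ ^ 2)))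
    (Real.sqrt_pos.mpr (by positivity)) hxt1 hmin2 xt hxt
  rw [norm_sub_rev xt1 xt] at h1
  simp only [inner_add_left] at h2
  have hinner : ⟪ct, xt - xt1⟫ = ⟪ct, xt⟫ - ⟪ct, xt1⟫ := inner_sub_right _ _ _
  have hcs : ⟪ct, xt - xt1⟫ ≤ ‖ct‖ * ‖xt - xt1‖ := real_inner_le_norm _ _
  have hη12 : Real.sqrt (1 + S1) ≤ Real.sqrt (1 + (S1 + ‖ct‖ ^ 2)) :=
    Real.sqrt_le_sqrt (by linarith [sq_nonneg ‖ct‖])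
  have hxtsq : ‖xt‖ ^ 2 ≤ 1 := by nlinarith [norm_nonneg xt]
  have hxt1sq : (0:ℝ) ≤ ‖xt1‖ ^ 2 := by positivity
  have hp1 : (Real.sqrt (1 + (S1 + ‖ct‖ ^ 2)) - Real.sqrt (1 + S1)) / 2 *
      (‖xt‖ ^ 2 - ‖xt1‖ ^ 2) ≤
      (Real.sqrt (1 + (S1 + ‖ct‖ ^ 2)) - Real.sqrt (1 + S1)) / 2 * 1 :=
    mul_le_mul_of_nonneg_left (by linarith) (by linarith)
  have main : (Real.sqrt (1 + S1) + Real.sqrt (1 + (S1 + ‖ct‖ ^ 2))) / 2 * ‖xt - xt1‖ ^ 2 ≤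
      ‖ct‖ * ‖xt - xt1‖ +
        (Real.sqrt (1 + (S1 + ‖ct‖ ^ 2)) - Real.sqrt (1 + S1)) / 2 := by
    linarith [h1, h2, hcs, hinner, hp1]
  exact arith S1 ‖ct‖ ‖xt - xt1‖ _ hS1 (norm_nonneg _) (norm_nonneg _) hcs main

/-- Telescoping sum over `Icc`. -/
lemma tele_s15 (f : ℕ → ℝ) (A B : ℕ) (hAB : A ≤ B) :
    ∑ t ∈ Finset.Icc A B, (f t - f (t - 1)) = f B - f (A - 1) := by
  induction B, hAB using Nat.le_induction with
  | base => simp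
  | succ B hB ih =>
      rw [Finset.sum_Icc_succ_top (Nat.le_succ_of_le hB), ih]
      simp only [Nat.add_sub_cancel]
      ring

/-- Second part of Proposition B.2: for every interval `1 ≤ A ≤ B ≤ T`,
`Σ_{t=A}^B ⟨c_t, x_t − x_{t+1}⟩ ≤ 4(√(σ_{1:B}) − √(σ_{1:A−1}))`. -/
theorem stmt15 {d T : ℕ} (c x : ℕ → Vec d)
    (hc : ∀ t ∈ Finset.Icc 1 T, ‖c t‖ ≤ 1)
    (hx1 : x 1 = 0)
    (hxball : ∀ t ∈ Finset.Icc 1 T, ‖x (t + 1)‖ ≤ 1)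
    (hxmin : ∀ t ∈ Finset.Icc 1 T, ∀ y : Vec d, ‖y‖ ≤ 1 →
      ⟪(∑ s ∈ Finset.Icc 1 t, c s), x (t + 1)⟫ +
          Real.sqrt (1 + ∑ s ∈ Finset.Icc 1 t, ‖c s‖ ^ 2) / 2 * ‖x (t + 1)‖ ^ 2 ≤
        ⟪(∑ s ∈ Finset.Icc 1 t, c s), y⟫ +
          Real.sqrt (1 + ∑ s ∈ Finset.Icc 1 t, ‖c s‖ ^ 2) / 2 * ‖y‖ ^ 2)
    (A B : ℕ) (hA : 1 ≤ A) (hAB : A ≤ B) (hB : B ≤ T) :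
    ∑ t ∈ Finset.Icc A B, ⟪c t, x t - x (t + 1)⟫ ≤
      4 * (Real.sqrt (∑ s ∈ Finset.Icc 1 B, ‖c s‖ ^ 2) -
        Real.sqrt (∑ s ∈ Finset.Icc 1 (A - 1), ‖c s‖ ^ 2)) := by
  have key : ∀ t ∈ Finset.Icc A B, ⟪c t, x t - x (t + 1)⟫ ≤
      4 * (Real.sqrt (∑ s ∈ Finset.Icc 1 t, ‖c s‖ ^ 2) -
        Real.sqrt (∑ s ∈ Finset.Icc 1 (t - 1), ‖c s‖ ^ 2)) := by
    intro t ht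
    simp only [Finset.mem_Icc] at ht
    have ht1 : 1 ≤ t := le_trans hA ht.1
    have htT : t ≤ T := le_trans ht.2 hB
    obtain ⟨t', rfl⟩ : ∃ t', t = t' + 1 := ⟨t - 1, (Nat.succ_pred_eq_of_pos ht1).symm⟩
    have hsum : ∑ s ∈ Finset.Icc 1 (t' + 1), ‖c s‖ ^ 2 =
        (∑ s ∈ Finset.Icc 1 t', ‖c s‖ ^ 2) + ‖c (t' + 1)‖ ^ 2 :=
      Finset.sum_Icc_succ_top (Nat.succ_le_succ (Nat.zero_le _)) _
    have hgsum : ∑ s ∈ Finset.Icc 1 (t' + 1), c s =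
        (∑ s ∈ Finset.Icc 1 t', c s) + c (t' + 1) :=
      Finset.sum_Icc_succ_top (Nat.succ_le_succ (Nat.zero_le _)) _
    have hS1 : (0:ℝ) ≤ ∑ s ∈ Finset.Icc 1 t', ‖c s‖ ^ 2 := by positivity
    have hxtb : ‖x (t' + 1)‖ ≤ 1 := by
      rcases Nat.eq_zero_or_pos t' with h0 | hpos
      · subst h0; rw [hx1]; simp
      · exact hxball t' (Finset.mem_Icc.2 ⟨hpos, by omega⟩)
    have hxt1b : ‖x (t' + 1 + 1)‖ ≤ 1 :=
      hxball (t' + 1) (Finset.mem_Icc.2 ⟨by omega, htT⟩)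
    have hmin1 : ∀ y : Vec d, ‖y‖ ≤ 1 →
        ⟪(∑ s ∈ Finset.Icc 1 t', c s), x (t' + 1)⟫ +
            Real.sqrt (1 + ∑ s ∈ Finset.Icc 1 t', ‖c s‖ ^ 2) / 2 * ‖x (t' + 1)‖ ^ 2 ≤
          ⟪(∑ s ∈ Finset.Icc 1 t', c s), y⟫ +
            Real.sqrt (1 + ∑ s ∈ Finset.Icc 1 t', ‖c s‖ ^ 2) / 2 * ‖y‖ ^ 2 := by
      rcases Nat.eq_zero_or_pos t' with h0 | hpos
      · subst h0
        intro y hy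
        have hempty : Finset.Icc 1 0 = (∅ : Finset ℕ) := Finset.Icc_eq_empty (by omega)
        rw [hempty]
        simp only [Finset.sum_empty, hx1, inner_zero_left, norm_zero]
        have : (0:ℝ) ≤ Real.sqrt (1 + 0) / 2 * ‖y‖ ^ 2 := by positivity
        simpa using this
      · exact hxmin t' (Finset.mem_Icc.2 ⟨hpos, by omega⟩)
    have hmin2 := hxmin (t' + 1) (Finset.mem_Icc.2 ⟨by omega, htT⟩)
    rw [hgsum, hsum] at hmin2
    have hres := step_bound_s15 (∑ s ∈ Finset.Icc 1 t', c s) (c (t' + 1)) (x (t' + 1))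
      (x (t' + 1 + 1)) (∑ s ∈ Finset.Icc 1 t', ‖c s‖ ^ 2) hS1 hxtb hxt1b hmin1 hmin2
    simp only [Nat.add_sub_cancel]
    rw [hsum]
    exact hres
  calc ∑ t ∈ Finset.Icc A B, ⟪c t, x t - x (t + 1)⟫
      ≤ ∑ t ∈ Finset.Icc A B, 4 * (Real.sqrt (∑ s ∈ Finset.Icc 1 t, ‖c s‖ ^ 2) -
          Real.sqrt (∑ s ∈ Finset.Icc 1 (t - 1), ‖c s‖ ^ 2)) := Finset.sum_le_sum key
    _ = 4 * ∑ t ∈ Finset.Icc A B, (Real.sqrt (∑ s ∈ Finset.Icc 1 t, ‖c s‖ ^ 2) -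
          Real.sqrt (∑ s ∈ Finset.Icc 1 (t - 1), ‖c s‖ ^ 2)) := by rw [← Finset.mul_sum]
    _ ≤ 4 * (Real.sqrt (∑ s ∈ Finset.Icc 1 B, ‖c s‖ ^ 2) -
        Real.sqrt (∑ s ∈ Finset.Icc 1 (A - 1), ‖c s‖ ^ 2)) := by
        rw [tele_s15 (fun t => Real.sqrt (∑ s ∈ Finset.Icc 1 t, ‖c s‖ ^ 2)) A B hAB]
end

section
/- Let α ∈ (0,1), let x_1, …, x_{T+1} be the adaptive FTRL iterates for cost vectors c_1, …, c_T, and let S ∈ {0,…,T} satisfy ‖c_{1:t}‖ ≥ (α/4)·(1 + σ_{1:t}) for all t > S. (a) If t > S is an index for which both ‖x_t‖ = 1 and ‖x_{t+1}‖ = 1, then ‖x_t − x_{t+1}‖ ≤ 8‖c_t‖ / (α·(1 + σ_{1:t})). (b) If M > S is an index such that ‖x_t‖ = 1 for all t with M ≤ t ≤ T+1, then Σ_{t=M}^T ⟨c_t, x_t − x_{t+1}⟩ ≤ (8/α)·log(1 + σ_{1:T}). -/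
open RealInnerProductSpace

lemma helperA {E : Type*} [NormedAddCommGroup E] [InnerProductSpace ℝ E]
    (b y : E) (hb : b ≠ 0) (hy : ‖y‖ = 1) (h : ⟪b, y⟫ ≤ -‖b‖) :
    y = -((‖b‖)⁻¹ • b) := by
  have h1 : |⟪b, y⟫| ≤ ‖b‖ * ‖y‖ := abs_real_inner_le_norm b y
  have h2 : ⟪b, y⟫ = -‖b‖ := by
    have := neg_abs_le ⟪b, y⟫
    rw [hy, mul_one] at h1
    have := abs_le.mp h1
    linarith
  have h3 : ⟪-b, y⟫ = ‖-b‖ * ‖y‖ := by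
    rw [inner_neg_left, h2, norm_neg, hy]; ring
  have h4 := inner_eq_norm_mul_iff_real.mp h3
  rw [hy, norm_neg, one_smul] at h4
  have hb' : (‖b‖ : ℝ) ≠ 0 := norm_ne_zero_iff.mpr hb
  have h5 := congrArg (fun z => (‖b‖)⁻¹ • z) h4
  simp only [smul_smul, inv_mul_cancel₀ hb', one_smul] at h5
  rw [← h5, smul_neg]

lemma helperB {E : Type*} [NormedAddCommGroup E] [NormedSpace ℝ E]
    (a b : E) (ha : a ≠ 0) (hb : b ≠ 0) :
    ‖(‖a‖)⁻¹ • a - (‖b‖)⁻¹ • b‖ ≤ 2 * ‖a - b‖ / ‖b‖ := by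
  have hna : (0:ℝ) < ‖a‖ := norm_pos_iff.mpr ha
  have hnb : (0:ℝ) < ‖b‖ := norm_pos_iff.mpr hb
  have key : (‖a‖)⁻¹ • a - (‖b‖)⁻¹ • b = (‖b‖)⁻¹ • (a - b) + ((‖a‖)⁻¹ - (‖b‖)⁻¹) • a := by
    rw [smul_sub, sub_smul]; abel
  rw [key]
  have h1 : ‖(‖b‖)⁻¹ • (a - b)‖ = (‖b‖)⁻¹ * ‖a - b‖ := by
    rw [norm_smul, Real.norm_eq_abs, abs_of_pos (inv_pos.mpr hnb)]
  have h2 : ‖((‖a‖)⁻¹ - (‖b‖)⁻¹) • a‖ = |(‖a‖)⁻¹ - (‖b‖)⁻¹| * ‖a‖ := by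
    rw [norm_smul, Real.norm_eq_abs]
  have h3 : |(‖a‖)⁻¹ - (‖b‖)⁻¹| * ‖a‖ ≤ ‖a - b‖ / ‖b‖ := by
    have e : (‖a‖)⁻¹ - (‖b‖)⁻¹ = (‖b‖ - ‖a‖) / (‖a‖ * ‖b‖) := by
      field_simp
    rw [e, abs_div, abs_of_pos (mul_pos hna hnb), div_mul_eq_mul_div]
    have h4 : |‖b‖ - ‖a‖| ≤ ‖a - b‖ := by
      rw [← norm_sub_rev]
      exact abs_norm_sub_norm_le b a
    rw [div_le_div_iff₀ (mul_pos hna hnb) hnb]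
    nlinarith [mul_le_mul_of_nonneg_right h4 (mul_pos hna hnb).le]
  calc ‖(‖b‖)⁻¹ • (a - b) + ((‖a‖)⁻¹ - (‖b‖)⁻¹) • a‖
      ≤ ‖(‖b‖)⁻¹ • (a - b)‖ + ‖((‖a‖)⁻¹ - (‖b‖)⁻¹) • a‖ := norm_add_le _ _
    _ ≤ (‖b‖)⁻¹ * ‖a - b‖ + ‖a - b‖ / ‖b‖ := by rw [h1, h2]; linarith [h3]
    _ = 2 * ‖a - b‖ / ‖b‖ := by field_simp; ring

lemma helperC {u v : ℝ} (hu : 0 < u) (huv : u ≤ v) :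
    (v - u) / v ≤ Real.log v - Real.log u := by
  have hv : 0 < v := lt_of_lt_of_le hu huv
  have h := Real.log_le_sub_one_of_pos (show 0 < u / v from div_pos hu hv)
  rw [Real.log_div hu.ne' hv.ne'] at h
  have e : u / v - 1 = -((v - u) / v) := by field_simp; ring
  linarith [e ▸ h]

lemma telescope (g : ℕ → ℝ) (M : ℕ) : ∀ T, M ≤ T →
    ∑ t ∈ Finset.Icc M T, (g t - g (t - 1)) = g T - g (M - 1) := by
  intro T
  induction T with
  | zero => intro h; interval_cases M <;> simp
  | succ n ih =>
    intro h
    rcases Nat.lt_or_ge M (n + 1) with h' | h'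
    · rw [Finset.sum_Icc_succ_top (by omega), ih (by omega)]
      simp only [Nat.add_sub_cancel]
      ring
    · have : M = n + 1 := by omega
      subst this
      rw [Finset.Icc_self, Finset.sum_singleton]

set_option maxHeartbeats 1000000 in
/-- Proposition B.3: under the growth condition
`‖c_{1:t}‖ ≥ (α/4)(1+σ_{1:t})` for all `t > S`, (a) if `t > S` and both `x_t` and `x_{t+1}`
are unit vectors, then `‖x_t − x_{t+1}‖ ≤ 8‖c_t‖/(α(1+σ_{1:t}))`; and (b) if `M > S` and
`‖x_t‖ = 1` for all `M ≤ t ≤ T+1`, then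
`Σ_{t=M}^T ⟨c_t, x_t − x_{t+1}⟩ ≤ (8/α)·log(1+σ_{1:T})`. -/
theorem stmt16 {d T : ℕ} (α : ℝ) (hα0 : 0 < α) (hα1 : α < 1)
    (c x : ℕ → Vec d)
    (hc : ∀ t ∈ Finset.Icc 1 T, ‖c t‖ ≤ 1)
    (hx1 : x 1 = 0)
    (hxball : ∀ t ∈ Finset.Icc 1 T, ‖x (t + 1)‖ ≤ 1)
    (hxmin : ∀ t ∈ Finset.Icc 1 T, ∀ y : Vec d, ‖y‖ ≤ 1 →
      ⟪(∑ s ∈ Finset.Icc 1 t, c s), x (t + 1)⟫ +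
          Real.sqrt (1 + ∑ s ∈ Finset.Icc 1 t, ‖c s‖ ^ 2) / 2 * ‖x (t + 1)‖ ^ 2 ≤
        ⟪(∑ s ∈ Finset.Icc 1 t, c s), y⟫ +
          Real.sqrt (1 + ∑ s ∈ Finset.Icc 1 t, ‖c s‖ ^ 2) / 2 * ‖y‖ ^ 2)
    (S : ℕ) (hS : S ≤ T)
    (hgrow : ∀ t, S < t → t ≤ T →
      α / 4 * (1 + ∑ s ∈ Finset.Icc 1 t, ‖c s‖ ^ 2) ≤ ‖∑ s ∈ Finset.Icc 1 t, c s‖) :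
    (∀ t, S < t → t ≤ T → ‖x t‖ = 1 → ‖x (t + 1)‖ = 1 →
        ‖x t - x (t + 1)‖ ≤
          8 * ‖c t‖ / (α * (1 + ∑ s ∈ Finset.Icc 1 t, ‖c s‖ ^ 2))) ∧
      ∀ M, S < M → (∀ t, M ≤ t → t ≤ T + 1 → ‖x t‖ = 1) →
        ∑ t ∈ Finset.Icc M T, ⟪c t, x t - x (t + 1)⟫ ≤
          8 / α * Real.log (1 + ∑ s ∈ Finset.Icc 1 T, ‖c s‖ ^ 2) := by
  have hσnn : ∀ t, (0:ℝ) ≤ ∑ s ∈ Finset.Icc 1 t, ‖c s‖ ^ 2 := fun t =>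
    Finset.sum_nonneg fun s _ => sq_nonneg _
  -- if the iterate is a unit vector and the cumulative cost is nonzero, it is the
  -- normalized negative cumulative cost
  have hunit : ∀ t, 1 ≤ t → t ≤ T → ‖x (t + 1)‖ = 1 →
      (∑ s ∈ Finset.Icc 1 t, c s) ≠ 0 →
      x (t + 1) = -((‖∑ s ∈ Finset.Icc 1 t, c s‖)⁻¹ • ∑ s ∈ Finset.Icc 1 t, c s) := by
    intro t ht1 htT hxn hb
    set b := ∑ s ∈ Finset.Icc 1 t, c s with hbdef
    have hnb : (0:ℝ) < ‖b‖ := norm_pos_iff.mpr hb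
    have hy : ‖-((‖b‖)⁻¹ • b)‖ = 1 := by
      rw [norm_neg, norm_smul, Real.norm_eq_abs, abs_of_pos (inv_pos.mpr hnb),
        inv_mul_cancel₀ hnb.ne']
    have hmin := hxmin t (Finset.mem_Icc.mpr ⟨ht1, htT⟩) (-((‖b‖)⁻¹ • b)) (le_of_eq hy)
    have hip : ⟪b, -((‖b‖)⁻¹ • b)⟫ = -‖b‖ := by
      rw [inner_neg_right, real_inner_smul_right, real_inner_self_eq_norm_sq]
      field_simp
    rw [hxn, hy, hip] at hmin
    exact helperA b (x (t + 1)) hb hxn (by linarith)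
  have parta : ∀ t, S < t → t ≤ T → ‖x t‖ = 1 → ‖x (t + 1)‖ = 1 →
      ‖x t - x (t + 1)‖ ≤
        8 * ‖c t‖ / (α * (1 + ∑ s ∈ Finset.Icc 1 t, ‖c s‖ ^ 2)) := by
    intro t hSt htT hxt hxt1
    have ht2 : 2 ≤ t := by
      by_contra h
      have ht1 : t = 1 := by omega
      rw [ht1, hx1] at hxt
      simp at hxt
    obtain ⟨k, rfl⟩ : ∃ k, t = k + 1 := ⟨t - 1, by omega⟩
    have hk1 : 1 ≤ k := by omega
    set a := ∑ s ∈ Finset.Icc 1 k, c s with hadef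
    set b := ∑ s ∈ Finset.Icc 1 (k + 1), c s with hbdef
    have hb_eq : b = a + c (k + 1) := by
      rw [hbdef, Finset.sum_Icc_succ_top (by omega)]
    have hσpos : (0:ℝ) < 1 + ∑ s ∈ Finset.Icc 1 (k + 1), ‖c s‖ ^ 2 := by
      have := hσnn (k + 1); linarith
    have hg := hgrow (k + 1) hSt htT
    rw [← hbdef] at hg
    have hnb : (0:ℝ) < ‖b‖ := lt_of_lt_of_le (mul_pos (by linarith) hσpos) hg
    have hbne : b ≠ 0 := norm_pos_iff.mp hnb
    have hane : a ≠ 0 := by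
      intro ha0
      have h0 := hxmin k (Finset.mem_Icc.mpr ⟨hk1, by omega⟩) 0 (by simp)
      rw [← hadef, ha0, hxt] at h0
      have hs : (0:ℝ) < Real.sqrt (1 + ∑ s ∈ Finset.Icc 1 k, ‖c s‖ ^ 2) :=
        Real.sqrt_pos.mpr (by have := hσnn k; linarith)
      simp at h0
      linarith
    have hxa : x (k + 1) = -((‖a‖)⁻¹ • a) := hunit k hk1 (by omega) hxt hane
    have hxb : x (k + 1 + 1) = -((‖b‖)⁻¹ • b) := hunit (k + 1) (by omega) htT hxt1 hbne
    rw [hxa, hxb]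
    have hrw : ‖-((‖a‖)⁻¹ • a) - -((‖b‖)⁻¹ • b)‖ = ‖(‖a‖)⁻¹ • a - (‖b‖)⁻¹ • b‖ := by
      rw [← norm_neg]; congr 1; abel
    rw [hrw]
    have hB := helperB a b hane hbne
    have hab : ‖a - b‖ = ‖c (k + 1)‖ := by
      rw [hb_eq]
      simp
    rw [hab] at hB
    refine hB.trans ?_
    rw [div_le_div_iff₀ hnb (mul_pos hα0 hσpos)]
    nlinarith [norm_nonneg (c (k + 1)), hσnn (k + 1)]
  refine ⟨parta, ?_⟩
  intro M hSM hall
  set g : ℕ → ℝ := fun t => Real.log (1 + ∑ s ∈ Finset.Icc 1 t, ‖c s‖ ^ 2) with hg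
  have hgnn : ∀ t, 0 ≤ g t := fun t => Real.log_nonneg (by have := hσnn t; linarith)
  have hstep : ∀ t ∈ Finset.Icc M T, ⟪c t, x t - x (t + 1)⟫ ≤ 8 / α * (g t - g (t - 1)) := by
    intro t ht
    obtain ⟨hMt, htT⟩ := Finset.mem_Icc.mp ht
    have h1 := parta t (by omega) htT (hall t hMt (by omega)) (hall (t + 1) (by omega) (by omega))
    have h2 : ⟪c t, x t - x (t + 1)⟫ ≤ ‖c t‖ * ‖x t - x (t + 1)‖ := real_inner_le_norm _ _
    have hσpos : (0:ℝ) < 1 + ∑ s ∈ Finset.Icc 1 t, ‖c s‖ ^ 2 := by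
      have := hσnn t; linarith
    have hsum : (∑ s ∈ Finset.Icc 1 t, ‖c s‖ ^ 2)
        = (∑ s ∈ Finset.Icc 1 (t - 1), ‖c s‖ ^ 2) + ‖c t‖ ^ 2 := by
      have e : t = (t - 1) + 1 := by omega
      rw [e, Finset.sum_Icc_succ_top (by omega), ← e]
    have hC := helperC (u := 1 + ∑ s ∈ Finset.Icc 1 (t - 1), ‖c s‖ ^ 2)
        (v := 1 + ∑ s ∈ Finset.Icc 1 t, ‖c s‖ ^ 2)
        (by have := hσnn (t - 1); linarith)
        (by rw [hsum]; nlinarith [sq_nonneg ‖c t‖])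
    have hvu : (1 + ∑ s ∈ Finset.Icc 1 t, ‖c s‖ ^ 2)
        - (1 + ∑ s ∈ Finset.Icc 1 (t - 1), ‖c s‖ ^ 2) = ‖c t‖ ^ 2 := by
      rw [hsum]; ring
    rw [hvu] at hC
    have h3 : ‖c t‖ * ‖x t - x (t + 1)‖
        ≤ ‖c t‖ * (8 * ‖c t‖ / (α * (1 + ∑ s ∈ Finset.Icc 1 t, ‖c s‖ ^ 2))) :=
      mul_le_mul_of_nonneg_left h1 (norm_nonneg _)
    have h4 : ‖c t‖ * (8 * ‖c t‖ / (α * (1 + ∑ s ∈ Finset.Icc 1 t, ‖c s‖ ^ 2)))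
        = 8 / α * (‖c t‖ ^ 2 / (1 + ∑ s ∈ Finset.Icc 1 t, ‖c s‖ ^ 2)) := by
      field_simp
    have h5 : 8 / α * (‖c t‖ ^ 2 / (1 + ∑ s ∈ Finset.Icc 1 t, ‖c s‖ ^ 2))
        ≤ 8 / α * (g t - g (t - 1)) := by
      apply mul_le_mul_of_nonneg_left _ (by positivity)
      exact hC
    calc ⟪c t, x t - x (t + 1)⟫ ≤ ‖c t‖ * ‖x t - x (t + 1)‖ := h2
      _ ≤ _ := h3
      _ = _ := h4
      _ ≤ _ := h5
  calc ∑ t ∈ Finset.Icc M T, ⟪c t, x t - x (t + 1)⟫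
      ≤ ∑ t ∈ Finset.Icc M T, 8 / α * (g t - g (t - 1)) := Finset.sum_le_sum hstep
    _ ≤ 8 / α * g T := by
        rcases Nat.lt_or_ge T M with h | h
        · rw [Finset.Icc_eq_empty (by omega), Finset.sum_empty]
          exact mul_nonneg (by positivity) (hgnn T)
        · rw [← Finset.mul_sum, telescope g M T h]
          have := hgnn (M - 1)
          have h8 : (0:ℝ) ≤ 8 / α := by positivity
          nlinarith
end
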